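/- arXiv:math/0610602 — 7 statements merged into one kernel-verified Lean document; each statement's English description precedes it below -/
import Mathlib

section
/- Let a ∈ (1, 2] and b ∈ (0, 1), let x* = ((b − 1) + √((1 − b)² + 4a)) / (2a), and let z* = (x*, b x*) be the fixed point of the Hénon map f_{a,b} in the open first quadrant. Then the Jacobian matrix of f_{a,b} at z*, namely the 2×2 real matrix with rows (−2a x*, 1) and (b, 0), has two distinct real eigenvalues λ_u and λ_s satisfying λ_u < −1 and 0 < λ_s < 1; in particular z* is a hyperbolic saddle fixed point, with one real eigenvalue of modulus greater than 1 and one of modulus less than 1. -/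
/-- The Hénon map `f_{a,b}(x, y) = (1 - a x² + y, b x)`. -/
def henon (a b : ℝ) : ℝ × ℝ → ℝ × ℝ := fun p => (1 - a * p.1 ^ 2 + p.2, b * p.1)

/-- A real number `lam` is an eigenvalue of a 2×2 real matrix `M` if there is a nonzero
vector `u` with `M u = lam • u`. -/
def IsRealEigenvalue (M : Matrix (Fin 2) (Fin 2) ℝ) (lam : ℝ) : Prop :=
  ∃ u : Fin 2 → ℝ, u ≠ 0 ∧ M.mulVec u = lam • u

lemma henon_eig_aux (b t lam : ℝ) (hb : b ≠ 0) (M : Matrix (Fin 2) (Fin 2) ℝ)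
    (hM : M = !![-t, 1; b, 0]) (hroot : lam ^ 2 + t * lam - b = 0) :
    IsRealEigenvalue M lam := by
  refine ⟨![lam, b], ?_, ?_⟩
  · intro h
    have := congrFun h 1
    simp at this
    exact hb this
  · funext i
    fin_cases i <;>
      simp [hM, Matrix.mulVec, dotProduct, Fin.sum_univ_two] <;> nlinarith [hroot]

/-- For `a ∈ (1, 2]` and `b ∈ (0, 1)`, the Jacobian of the Hénon map at the fixed point
`z* = (x*, b x*)` in the first quadrant, that is the matrix with rows `(-2a x*, 1)` and
`(b, 0)`, has two distinct real eigenvalues `λ_u < -1` and `0 < λ_s < 1`; in particular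
`z*` is a hyperbolic saddle, with one eigenvalue of modulus greater than 1 and one of
modulus less than 1. -/
theorem henon_fixed_point_saddle (a b : ℝ) (ha1 : 1 < a) (ha2 : a ≤ 2)
    (hb0 : 0 < b) (hb1 : b < 1)
    (xs : ℝ) (hxs : xs = ((b - 1) + Real.sqrt ((1 - b) ^ 2 + 4 * a)) / (2 * a))
    (M : Matrix (Fin 2) (Fin 2) ℝ) (hM : M = !![-(2 * a * xs), 1; b, 0]) :
    ∃ lu ls : ℝ, lu ≠ ls ∧ lu < -1 ∧ 0 < ls ∧ ls < 1 ∧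
      IsRealEigenvalue M lu ∧ IsRealEigenvalue M ls ∧
      1 < |lu| ∧ |ls| < 1 := by
  set t : ℝ := 2 * a * xs with hts
  have ha0 : (0:ℝ) < a := by linarith
  have hr2 : Real.sqrt ((1 - b) ^ 2 + 4 * a) ^ 2 = (1 - b) ^ 2 + 4 * a :=
    Real.sq_sqrt (by nlinarith)
  have htval : t = (b - 1) + Real.sqrt ((1 - b) ^ 2 + 4 * a) := by
    rw [hts, hxs]; field_simp
  have ht : 1 - b < t := by
    rw [htval]
    have h1 : 2 * (1 - b) < Real.sqrt ((1 - b) ^ 2 + 4 * a) := by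
      nlinarith [Real.sqrt_nonneg ((1 - b) ^ 2 + 4 * a), hr2]
    linarith
  have ht0 : 0 < t := by linarith
  set s : ℝ := Real.sqrt (t ^ 2 + 4 * b) with hss
  have hs2 : s ^ 2 = t ^ 2 + 4 * b := Real.sq_sqrt (by nlinarith)
  have hs0 : 0 < s := Real.sqrt_pos.mpr (by nlinarith)
  have hst : t < s := by nlinarith [hs2, hs0, ht0]
  have h2t : 2 - t < s := by nlinarith [hs2, hs0, ht, hst]
  have hst2 : s < t + 2 := by nlinarith [hs2, hs0, ht0, hb1]
  have hlu : (-t - s) / 2 < -1 := by linarith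
  have hls0 : 0 < (-t + s) / 2 := by linarith
  have hls1 : (-t + s) / 2 < 1 := by linarith
  refine ⟨(-t - s) / 2, (-t + s) / 2, by intro h; linarith [h2t, hst],
    hlu, hls0, hls1, ?_, ?_, ?_, ?_⟩
  · exact henon_eig_aux b t _ (ne_of_gt hb0) M (by rw [hM, hts])
      (by linear_combination hs2 / 4)
  · exact henon_eig_aux b t _ (ne_of_gt hb0) M (by rw [hM, hts])
      (by linear_combination hs2 / 4)
  · rw [abs_of_neg (by linarith)]; linarith
  · rw [abs_of_pos hls0]; linarith
end

section
/- Matrix Perturbation Lemma, expansion estimate: For every κ ∈ (0, 5] there exists b₀ ∈ (0, κ) such that for every b ∈ (0, b₀) there exists λ with b < λ < min(1, κ) with the following property. Let n ≥ 1, let v ∈ ℝ² be a unit vector, and let A₁, …, Aₙ and A₁′, …, Aₙ′ be 2×2 real matrices with det Aᵢ = b, det Aᵢ′ = b, ‖Aᵢ‖ ≤ 5 and ‖Aᵢ′‖ ≤ 5 for all 1 ≤ i ≤ n. If ‖Aⁱ v‖ ≥ κⁱ and ‖Aᵢ − Aᵢ′‖ < λⁱ for all 1 ≤ i ≤ n,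 then ‖A′ⁱ v‖ ≥ κⁱ / 2 for all 1 ≤ i ≤ n. -/
/-!
Write `wₚ = Aᵖ v`, `w'ₚ = A'ᵖ v` and split `w'ₚ = sₚ wₚ + zₚ` with `zₚ ⟂ wₚ`, where
`sₚ = ⟪w'ₚ, wₚ⟫ / ‖wₚ‖²` and `‖zₚ‖ ‖wₚ‖ = |ω (w'ₚ, wₚ)|` for the area form `ω`. A linear map
multiplies areas by its determinant `b`, so the area obeys
`|ωₚ₊₁| ≤ b |ωₚ| + λ^(p+1) ‖w'ₚ‖ ‖wₚ₊₁‖`; with `λ = 2b` and `b ≤ κ³/1000` it stays below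
`(κ/40) (κ²/2)ᵖ`. As `‖wₚ‖ ≥ κᵖ`, the transverse part `zₚ` is then too small to move the coefficient
by more than `2⁻ᵖ/4` per step, so `|sₚ - 1| ≤ 1/2` and `‖w'ₚ‖ ≥ sₚ ‖wₚ‖ ≥ κᵖ/2`.
-/

noncomputable section

/-- The Euclidean plane. -/
abbrev E2 := EuclideanSpace ℝ (Fin 2)

/-- Given a sequence of linear maps `A₁, A₂, …` on the plane, `matProd A i = Aᵢ ⋯ A₂ A₁`
(with `matProd A 0 = id`). -/
def matProd (A : ℕ → (E2 →L[ℝ] E2)) : ℕ → (E2 →L[ℝ] E2)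
  | 0 => ContinuousLinearMap.id ℝ E2
  | (i + 1) => (A (i + 1)).comp (matProd A i)

open Module RealInnerProductSpace Finset

theorem norm_orbit_le_pow_mul {F : Type*} [SeminormedAddCommGroup F] [NormedSpace ℝ F]
    {A : ℕ → F →L[ℝ] F} {w : ℕ → F} {C : ℝ} {n : ℕ} (hw : ∀ p, w (p + 1) = A (p + 1) (w p))
    (hA : ∀ p < n, ‖A (p + 1)‖ ≤ C) : ∀ p ≤ n, ‖w p‖ ≤ C ^ p * ‖w 0‖ := by
  intro p hp
  induction p with
  | zero => simp
  | succ p ih =>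
    have hC := hA p hp
    calc ‖w (p + 1)‖ ≤ ‖A (p + 1)‖ * ‖w p‖ := hw p ▸ (A (p + 1)).le_opNorm (w p)
      _ ≤ C * (C ^ p * ‖w 0‖) := by gcongr; exacts [(norm_nonneg _).trans hC, ih (by omega)]
      _ = C ^ (p + 1) * ‖w 0‖ := by ring

theorem norm_div_two_le_norm_of_abs_inner_div_norm_sq_sub_one_le {F : Type*}
    [NormedAddCommGroup F] [InnerProductSpace ℝ F] {x' x : F}
    (h : |⟪x', x⟫ / ‖x‖ ^ 2 - 1| ≤ 1 / 2) : ‖x‖ / 2 ≤ ‖x'‖ := by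
  rcases eq_or_ne x 0 with rfl | hx
  · simp
  have hx0 : 0 < ‖x‖ := norm_pos_iff.2 hx
  have hhalf : ‖x‖ ^ 2 / 2 ≤ ⟪x', x⟫ := by
    have := (abs_le.1 h).1
    rw [le_sub_iff_add_le, le_div_iff₀ (by positivity)] at this
    linarith
  refine le_of_mul_le_mul_right ?_ hx0
  calc ‖x‖ / 2 * ‖x‖ = ‖x‖ ^ 2 / 2 := by ring
    _ ≤ ⟪x', x⟫ := hhalf
    _ ≤ ‖x'‖ * ‖x‖ := real_inner_le_norm x' x

variable {E : Type*} [NormedAddCommGroup E] [InnerProductSpace ℝ E] [Fact (finrank ℝ E = 2)]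
  {A A' : ℕ → E →L[ℝ] E} {w w' : ℕ → E} {n : ℕ} {κ b : ℝ}

namespace Orientation

variable (o : Orientation ℝ E (Fin 2))

local notation "ω" => o.areaForm

theorem areaForm_map_map_eq_det_mul (T : E →ₗ[ℝ] E) (x y : E) :
    ω (T x) (T y) = LinearMap.det T * ω x y := by
  let e := o.finOrthonormalBasis two_pos Fact.out
  have he : o.volumeForm = e.toBasis.det :=
    o.volumeForm_robust e (o.finOrthonormalBasis_orientation two_pos Fact.out)
  have hcomp : ![T x, T y] = T ∘ ![x, y] := by ext i; fin_cases i <;> rfl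
  rw [areaForm_to_volumeForm, areaForm_to_volumeForm, he, hcomp, Basis.det_comp]

theorem norm_sub_inner_div_smul_mul_norm_eq_abs_areaForm (x y : E) :
    ‖x - (⟪x, y⟫ / ‖y‖ ^ 2) • y‖ * ‖y‖ = |ω x y| := by
  rcases eq_or_ne y 0 with rfl | hy
  · simp
  have horth : ⟪x - (⟪x, y⟫ / ‖y‖ ^ 2) • y, y⟫ = 0 := by
    have : ‖y‖ ^ 2 ≠ 0 := by positivity
    rw [inner_sub_left, real_inner_smul_left, real_inner_self_eq_norm_sq]
    field_simp; ring
  rw [← o.abs_areaForm_of_orthogonal horth, map_sub, map_smul, LinearMap.sub_apply,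
    LinearMap.smul_apply, o.areaForm_apply_self, smul_zero, sub_zero]

theorem abs_areaForm_map_sub_le (T T' : E →L[ℝ] E) (x' x : E) :
    |ω (T' x') (T x)| ≤ |LinearMap.det (T : E →ₗ[ℝ] E)| * |ω x' x| + ‖T - T'‖ * ‖x'‖ * ‖T x‖ := by
  have hsplit :
      ω (T' x') (T x) = LinearMap.det (T : E →ₗ[ℝ] E) * ω x' x - ω ((T - T') x') (T x) := by
    rw [← o.areaForm_map_map_eq_det_mul (T : E →ₗ[ℝ] E), sub_apply, map_sub, LinearMap.sub_apply,
      ContinuousLinearMap.coe_coe, sub_sub_cancel]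
  calc |ω (T' x') (T x)|
      ≤ |LinearMap.det (T : E →ₗ[ℝ] E)| * |ω x' x| + ‖(T - T') x'‖ * ‖T x‖ := by
        rw [hsplit, ← abs_mul]
        exact (abs_sub _ _).trans (add_le_add_right (o.abs_areaForm_le _ _) _)
    _ ≤ _ := by gcongr; exact (T - T').le_opNorm x'

theorem abs_inner_div_norm_sq_map_sub_le (T T' : E →L[ℝ] E) (x' : E) {x : E} (hx : T x ≠ 0) :
    |⟪T' x', T x⟫ / ‖T x‖ ^ 2 - ⟪x', x⟫ / ‖x‖ ^ 2|
      ≤ (‖T‖ * (|ω x' x| / ‖x‖) + ‖T - T'‖ * ‖x'‖) / ‖T x‖ := by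
  set s := ⟪x', x⟫ / ‖x‖ ^ 2
  set z := x' - s • x
  have hTx : 0 < ‖T x‖ := norm_pos_iff.2 hx
  have hx0 : 0 < ‖x‖ := norm_pos_iff.2 fun h => hx (by rw [h, map_zero])
  have hz : ‖z‖ = |ω x' x| / ‖x‖ :=
    eq_div_of_mul_eq hx0.ne' (o.norm_sub_inner_div_smul_mul_norm_eq_abs_areaForm x' x)
  have hdecomp : T' x' = s • T x + T z - (T - T') x' := by
    simp only [z, map_sub, map_smul, sub_apply]; abel
  have hcoeff : ⟪T' x', T x⟫ / ‖T x‖ ^ 2 - s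
      = (⟪T z, T x⟫ - ⟪(T - T') x', T x⟫) / ‖T x‖ ^ 2 := by
    rw [hdecomp, inner_sub_left, inner_add_left, real_inner_smul_left, real_inner_self_eq_norm_sq]
    field_simp; ring
  have hnum : |⟪T z, T x⟫ - ⟪(T - T') x', T x⟫|
      ≤ (‖T‖ * (|ω x' x| / ‖x‖) + ‖T - T'‖ * ‖x'‖) * ‖T x‖ := by
    calc |⟪T z, T x⟫ - ⟪(T - T') x', T x⟫| ≤ ‖T z‖ * ‖T x‖ + ‖(T - T') x'‖ * ‖T x‖ :=
          (abs_sub _ _).trans (add_le_add (abs_real_inner_le_norm _ _) (abs_real_inner_le_norm _ _))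
      _ ≤ _ := by
          rw [add_mul, ← hz]; gcongr
          exacts [T.le_opNorm z, (T - T').le_opNorm x']
  calc |⟪T' x', T x⟫ / ‖T x‖ ^ 2 - s| = |⟪T z, T x⟫ - ⟪(T - T') x', T x⟫| / ‖T x‖ ^ 2 := by
        rw [hcoeff, abs_div, abs_of_pos (pow_pos hTx 2)]
    _ ≤ (‖T‖ * (|ω x' x| / ‖x‖) + ‖T - T'‖ * ‖x'‖) * ‖T x‖ / ‖T x‖ ^ 2 := by gcongr
    _ = _ := by field_simp

/-- The bound `(κ/40) (κ²/2)ᵖ` is tuned so that, divided by `‖wₚ‖ ‖wₚ₊₁‖ ≥ κ^(2p+1)`, it moves the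
coefficient `sₚ` by at most `2⁻ᵖ/8`. -/
theorem abs_areaForm_map_le_of_det_eq {T T' : E →L[ℝ] E} {x' x : E} {p : ℕ}
    (hκ : 0 < κ) (hκ5 : κ ≤ 5) (hb : 0 ≤ b) (hbκ : b ≤ κ ^ 3 / 1000)
    (hdet : LinearMap.det (T : E →ₗ[ℝ] E) = b) (hpert : ‖T - T'‖ ≤ (2 * b) ^ (p + 1))
    (hx' : ‖x'‖ ≤ 5 ^ p) (hTx : ‖T x‖ ≤ 5 ^ (p + 1)) (harea : |ω x' x| ≤ κ / 40 * (κ ^ 2 / 2) ^ p) :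
    |ω (T' x') (T x)| ≤ κ / 40 * (κ ^ 2 / 2) ^ (p + 1) := by
  have h50 : 2 * b * 5 * 5 ≤ κ ^ 2 / 2 := by nlinarith
  have hsum : b * (κ / 40 + 10) ≤ κ / 40 * (κ ^ 2 / 2) := by nlinarith
  calc |ω (T' x') (T x)|
        ≤ b * (κ / 40 * (κ ^ 2 / 2) ^ p) + (2 * b) ^ (p + 1) * 5 ^ p * 5 ^ (p + 1) := by
        refine (o.abs_areaForm_map_sub_le T T' x' x).trans ?_
        rw [hdet, abs_of_nonneg hb]
        gcongr
    _ = b * (κ / 40 * (κ ^ 2 / 2) ^ p) + 10 * b * (2 * b * 5 * 5) ^ p := by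
        rw [mul_pow (2 * b * 5) 5, mul_pow (2 * b) 5]; ring
    _ ≤ b * (κ / 40 * (κ ^ 2 / 2) ^ p) + 10 * b * (κ ^ 2 / 2) ^ p := by gcongr
    _ = b * (κ / 40 + 10) * (κ ^ 2 / 2) ^ p := by ring
    _ ≤ κ / 40 * (κ ^ 2 / 2) * (κ ^ 2 / 2) ^ p := by gcongr
    _ = κ / 40 * (κ ^ 2 / 2) ^ (p + 1) := by ring

theorem abs_inner_div_norm_sq_map_sub_le_half_pow {T T' : E →L[ℝ] E} {x' x : E} {p : ℕ}
    (hκ : 0 < κ) (hκ5 : κ ≤ 5) (hb : 0 ≤ b) (hbκ : b ≤ κ ^ 3 / 1000)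
    (hT : ‖T‖ ≤ 5) (hpert : ‖T - T'‖ ≤ (2 * b) ^ (p + 1)) (hx' : ‖x'‖ ≤ 5 ^ p)
    (hx : κ ^ p ≤ ‖x‖) (hTx : κ ^ (p + 1) ≤ ‖T x‖) (harea : |ω x' x| ≤ κ / 40 * (κ ^ 2 / 2) ^ p) :
    |⟪T' x', T x⟫ / ‖T x‖ ^ 2 - ⟪x', x⟫ / ‖x‖ ^ 2| ≤ (1 / 2) ^ p / 4 := by
  have hb40 : b ≤ κ / 40 := by nlinarith
  have hTx0 : T x ≠ 0 := norm_pos_iff.1 ((pow_pos hκ _).trans_le hTx)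
  have hfirst : ‖T‖ * (|ω x' x| / ‖x‖) ≤ κ / 8 * (κ / 2) ^ p :=
    calc ‖T‖ * (|ω x' x| / ‖x‖) ≤ 5 * (κ / 40 * (κ ^ 2 / 2) ^ p / κ ^ p) := by gcongr
      _ = κ / 8 * (κ / 2) ^ p := by field_simp; ring
  have hsecond : ‖T - T'‖ * ‖x'‖ ≤ κ / 8 * (κ / 2) ^ p :=
    calc ‖T - T'‖ * ‖x'‖ ≤ (2 * b) ^ (p + 1) * 5 ^ p := by gcongr
      _ = 2 * b * (2 * b * 5) ^ p := by rw [mul_pow (2 * b) 5]; ring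
      _ ≤ κ / 8 * (κ / 2) ^ p := by gcongr <;> linarith
  calc _ ≤ (‖T‖ * (|ω x' x| / ‖x‖) + ‖T - T'‖ * ‖x'‖) / ‖T x‖ :=
        o.abs_inner_div_norm_sq_map_sub_le T T' x' hTx0
    _ ≤ κ / 4 * (κ / 2) ^ p / κ ^ (p + 1) := by gcongr; linarith
    _ = (1 / 2) ^ p / 4 := by field_simp; ring

theorem abs_areaForm_orbit_le (hκ : 0 < κ) (hκ5 : κ ≤ 5) (hb : 0 ≤ b) (hbκ : b ≤ κ ^ 3 / 1000)
    (hw : ∀ p, w (p + 1) = A (p + 1) (w p)) (hw' : ∀ p, w' (p + 1) = A' (p + 1) (w' p))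
    (h0 : w' 0 = w 0) (hdet : ∀ p < n, LinearMap.det (A (p + 1) : E →ₗ[ℝ] E) = b)
    (hpert : ∀ p < n, ‖A (p + 1) - A' (p + 1)‖ ≤ (2 * b) ^ (p + 1))
    (hwle : ∀ p ≤ n, ‖w p‖ ≤ 5 ^ p) (hw'le : ∀ p ≤ n, ‖w' p‖ ≤ 5 ^ p) :
    ∀ p ≤ n, |ω (w' p) (w p)| ≤ κ / 40 * (κ ^ 2 / 2) ^ p := by
  intro p hp
  induction p with
  | zero => rw [h0, o.areaForm_apply_self, abs_zero]; positivity
  | succ p ih =>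
    rw [hw, hw']
    exact o.abs_areaForm_map_le_of_det_eq hκ hκ5 hb hbκ (hdet p hp) (hpert p hp)
      (hw'le p (by omega)) (hw p ▸ hwle (p + 1) hp) (ih (by omega))

theorem abs_inner_div_norm_sq_orbit_sub_one_le (hκ : 0 < κ) (hκ5 : κ ≤ 5) (hb : 0 ≤ b)
    (hbκ : b ≤ κ ^ 3 / 1000) (hw : ∀ p, w (p + 1) = A (p + 1) (w p))
    (hw' : ∀ p, w' (p + 1) = A' (p + 1) (w' p)) (h0 : w' 0 = w 0)
    (hA : ∀ p < n, ‖A (p + 1)‖ ≤ 5) (hpert : ∀ p < n, ‖A (p + 1) - A' (p + 1)‖ ≤ (2 * b) ^ (p + 1))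
    (hgrow : ∀ p ≤ n, κ ^ p ≤ ‖w p‖) (hw'le : ∀ p ≤ n, ‖w' p‖ ≤ 5 ^ p)
    (harea : ∀ p ≤ n, |ω (w' p) (w p)| ≤ κ / 40 * (κ ^ 2 / 2) ^ p) :
    ∀ p ≤ n, |⟪w' p, w p⟫ / ‖w p‖ ^ 2 - 1| ≤ 1 / 2 := by
  intro p hp
  set s : ℕ → ℝ := fun j => ⟪w' j, w j⟫ / ‖w j‖ ^ 2
  have hs0 : s 0 = 1 := by
    have : w 0 ≠ 0 := norm_pos_iff.1 (by simpa using (hgrow 0 (Nat.zero_le n)).trans_lt' one_pos)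
    simp only [s, h0, real_inner_self_eq_norm_sq]
    exact div_self (by positivity)
  have hstep : ∀ j ∈ range p, dist (s j) (s (j + 1)) ≤ (1 / 2) ^ j / 4 := by
    intro j hj
    have hjn : j < n := (mem_range.1 hj).trans_le hp
    rw [dist_comm, Real.dist_eq]
    simp only [s, hw, hw']
    exact o.abs_inner_div_norm_sq_map_sub_le_half_pow hκ hκ5 hb hbκ (hA j hjn) (hpert j hjn)
      (hw'le j hjn.le) (hgrow j hjn.le) (hw j ▸ hgrow (j + 1) hjn) (harea j hjn.le)
  calc |s p - 1| = dist (s 0) (s p) := by rw [hs0, dist_comm, Real.dist_eq]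
    _ ≤ ∑ j ∈ range p, dist (s j) (s (j + 1)) := dist_le_range_sum_dist s p
    _ ≤ ∑ j ∈ range p, (1 / 2 : ℝ) ^ j / 4 := sum_le_sum hstep
    _ ≤ 2 / 4 := by rw [← sum_div]; gcongr; exact sum_geometric_two_le p
    _ = 1 / 2 := by norm_num

end Orientation

theorem pow_div_two_le_norm_orbit (hκ : 0 < κ) (hκ5 : κ ≤ 5) (hb : 0 ≤ b) (hbκ : b ≤ κ ^ 3 / 1000)
    (hw : ∀ p, w (p + 1) = A (p + 1) (w p)) (hw' : ∀ p, w' (p + 1) = A' (p + 1) (w' p))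
    (h0 : w' 0 = w 0) (hv : ‖w 0‖ = 1) (hdet : ∀ p < n, LinearMap.det (A (p + 1) : E →ₗ[ℝ] E) = b)
    (hA : ∀ p < n, ‖A (p + 1)‖ ≤ 5) (hA' : ∀ p < n, ‖A' (p + 1)‖ ≤ 5)
    (hpert : ∀ p < n, ‖A (p + 1) - A' (p + 1)‖ ≤ (2 * b) ^ (p + 1))
    (hgrow : ∀ p ≤ n, κ ^ p ≤ ‖w p‖) : ∀ p ≤ n, κ ^ p / 2 ≤ ‖w' p‖ := by
  have : FiniteDimensional ℝ E := .of_fact_finrank_eq_two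
  let o : Orientation ℝ E (Fin 2) := (finBasisOfFinrankEq ℝ E Fact.out).orientation
  have hwle : ∀ p ≤ n, ‖w p‖ ≤ 5 ^ p := by
    simpa [hv] using norm_orbit_le_pow_mul hw hA
  have hw'le : ∀ p ≤ n, ‖w' p‖ ≤ 5 ^ p := by
    simpa [h0, hv] using norm_orbit_le_pow_mul hw' hA'
  have harea := o.abs_areaForm_orbit_le hκ hκ5 hb hbκ hw hw' h0 hdet hpert hwle hw'le
  intro p hp
  calc κ ^ p / 2 ≤ ‖w p‖ / 2 := by gcongr; exact hgrow p hp
    _ ≤ ‖w' p‖ := norm_div_two_le_norm_of_abs_inner_div_norm_sq_sub_one_le <|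
        o.abs_inner_div_norm_sq_orbit_sub_one_le hκ hκ5 hb hbκ hw hw' h0 hA hpert hgrow hw'le
          harea p hp

/-- Matrix Perturbation Lemma, expansion estimate: for every `κ ∈ (0, 5]` there is
`b₀ ∈ (0, κ)` such that for every `b ∈ (0, b₀)` there is `λ` with `b < λ < min 1 κ`
such that for all `n ≥ 1`, every unit vector `v`, and all matrices `A₁, …, Aₙ`,
`A₁', …, Aₙ'` of determinant `b` and norm at most `5`, if `‖Aⁱ v‖ ≥ κⁱ` and
`‖Aᵢ - Aᵢ'‖ < λⁱ` for all `1 ≤ i ≤ n`, then `‖A'ⁱ v‖ ≥ κⁱ / 2` for all `1 ≤ i ≤ n`. -/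
theorem matrix_perturbation_expansion :
    ∀ κ : ℝ, 0 < κ → κ ≤ 5 →
    ∃ b₀ : ℝ, 0 < b₀ ∧ b₀ < κ ∧
    ∀ b : ℝ, 0 < b → b < b₀ →
    ∃ lam : ℝ, b < lam ∧ lam < min 1 κ ∧
    ∀ n : ℕ, 1 ≤ n → ∀ v : E2, ‖v‖ = 1 →
    ∀ A A' : ℕ → (E2 →L[ℝ] E2),
    (∀ i : ℕ, 1 ≤ i → i ≤ n →
      LinearMap.det (A i : E2 →ₗ[ℝ] E2) = b ∧ LinearMap.det (A' i : E2 →ₗ[ℝ] E2) = b ∧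
      ‖A i‖ ≤ 5 ∧ ‖A' i‖ ≤ 5) →
    (∀ i : ℕ, 1 ≤ i → i ≤ n → κ ^ i ≤ ‖matProd A i v‖ ∧ ‖A i - A' i‖ < lam ^ i) →
    ∀ i : ℕ, 1 ≤ i → i ≤ n → κ ^ i / 2 ≤ ‖matProd A' i v‖ := by
  intro κ hκ hκ5
  have hκ3 : κ ^ 3 ≤ 25 * κ := by nlinarith [mul_le_mul hκ5 hκ5 hκ.le (by norm_num : (0 : ℝ) ≤ 5)]
  refine ⟨κ ^ 3 / 1000, by positivity, by linarith, fun b hb hbb₀ => ⟨2 * b, by linarith, ?_, ?_⟩⟩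
  · exact lt_min (by linarith) (by linarith)
  intro n _ v hv A A' hmat hcond i _ hin
  have : Fact (finrank ℝ E2 = 2) := ⟨finrank_euclideanSpace_fin⟩
  have hgrow : ∀ p ≤ n, κ ^ p ≤ ‖matProd A p v‖ := by
    rintro (_ | p) hp
    · simp [matProd, hv]
    · exact (hcond (p + 1) (by omega) hp).1
  exact pow_div_two_le_norm_orbit (w := fun p => matProd A p v) (w' := fun p => matProd A' p v)
    hκ hκ5 hb.le hbb₀.le (fun _ => rfl) (fun _ => rfl) rfl hv
    (fun p hp => (hmat (p + 1) (by omega) hp).1) (fun p hp => (hmat (p + 1) (by omega) hp).2.2.1)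
    (fun p hp => (hmat (p + 1) (by omega) hp).2.2.2)
    (fun p hp => (hcond (p + 1) (by omega) hp).2.le)
    hgrow i hin
end
end

section
/- Matrix Perturbation Lemma, angle estimate: For every κ ∈ (0, 5] there exists b₀ ∈ (0, κ) such that for every b ∈ (0, b₀) there exists λ with b < λ < min(1, κ) with the following property. Let n ≥ 1, let v ∈ ℝ² be a unit vector, and let A₁, …, Aₙ and A₁′, …, Aₙ′ be 2×2 real matrices with det Aᵢ = b, det Aᵢ′ = b, ‖Aᵢ‖ ≤ 5 and ‖Aᵢ′‖ ≤ 5 for all 1 ≤ i ≤ n. If ‖Aⁱ v‖ ≥ κⁱ and ‖Aᵢ − Aᵢ′‖ < λⁱ for all 1 ≤ i ≤ n, then for all 1 ≤ i ≤ n the vectors Aⁱ v and A′ⁱ v are nonzero and the angle between Aⁱ v and A′ⁱ v is at most λ^{i/4}. -/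
/-!
Write `wᵢ = Aⁱ v`, `w'ᵢ = A'ⁱ v` and let `ω` be the area form of the plane. Since
`ω (A x) (A y) = det A · ω x y` and `w'ᵢ₊₁ = Aᵢ₊₁ w'ᵢ + (Aᵢ₊₁' - Aᵢ₊₁) w'ᵢ`, the determinant
`b < λ` damps the area `ωᵢ = ω wᵢ w'ᵢ` while each perturbation adds at most `5ⁱ⁺¹ λⁱ⁺¹ 5ⁱ`, so
`|ωᵢ| ≤ i (25 λ)ⁱ`. The projection coefficient `cᵢ = ⟪wᵢ, w'ᵢ⟫ / ‖wᵢ‖²` starts at `1` and, as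
`‖wᵢ‖ ≥ κⁱ`, moves by at most `(5 |ωᵢ| / ‖wᵢ‖ + λⁱ⁺¹ ‖w'ᵢ‖) / ‖wᵢ₊₁‖ ≤ 2⁻⁽ⁱ⁺²⁾` per step, so
`cᵢ ≥ 1/2`. Hence the angle between `wᵢ` and `w'ᵢ` is acute, `‖w'ᵢ‖ ≥ ‖wᵢ‖ / 2`, and the angle is
at most `π/2` times its sine `|ωᵢ| / (‖wᵢ‖ ‖w'ᵢ‖) ≤ 2 i (25 λ / κ²)ⁱ`, which is below `λ^(i/4)`
for `λ = (κ/10)⁴`.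
-/

noncomputable section

open Module InnerProductGeometry Real
open scoped RealInnerProductSpace

namespace Orientation

variable {V : Type*} [NormedAddCommGroup V] [InnerProductSpace ℝ V] [Fact (finrank ℝ V = 2)]
  (o : Orientation ℝ V (Fin 2))

local notation "ω" => o.areaForm

theorem areaForm_comp_linearMap (f : V →ₗ[ℝ] V) (x y : V) :
    ω (f x) (f y) = LinearMap.det f * ω x y := by
  obtain ⟨b, hb⟩ : ∃ b : OrthonormalBasis (Fin 2) ℝ V, b.toBasis.orientation = o :=
    ⟨_, o.finOrthonormalBasis_orientation two_pos Fact.out⟩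
  simp only [areaForm_to_volumeForm, o.volumeForm_robust b hb]
  rw [← b.toBasis.det_comp f ![x, y]]
  congr 1
  ext i; fin_cases i <;> rfl

theorem abs_areaForm_apply_apply_le (f g : V →L[ℝ] V) (u u' : V) :
    |ω (f u) (g u')| ≤ |LinearMap.det (f : V →ₗ[ℝ] V)| * |ω u u'| + ‖f u‖ * (‖f - g‖ * ‖u'‖) := by
  have hsplit : ω (f u) (g u') = LinearMap.det (f : V →ₗ[ℝ] V) * ω u u' - ω (f u) ((f - g) u') := by
    rw [← o.areaForm_comp_linearMap]
    simp [map_sub]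
  calc |ω (f u) (g u')| ≤ |LinearMap.det (f : V →ₗ[ℝ] V) * ω u u'| + |ω (f u) ((f - g) u')| := by
        rw [hsplit]; exact abs_sub _ _
    _ ≤ _ := by
      rw [abs_mul]
      gcongr
      exact (o.abs_areaForm_le _ _).trans (by gcongr; exact (f - g).le_opNorm u')

theorem angle_le_of_inner_nonneg {x y : V} (hx : x ≠ 0) (hy : y ≠ 0) (h : 0 ≤ ⟪x, y⟫) :
    angle x y ≤ π / 2 * (|ω x y| / (‖x‖ * ‖y‖)) := by
  have hxy : 0 < ‖x‖ * ‖y‖ := by positivity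
  have hsin : sin (angle x y) = |ω x y| / (‖x‖ * ‖y‖) := by
    rw [eq_div_iff hxy.ne', sin_angle_mul_norm_mul_norm, ← sqrt_sq_eq_abs]
    congr 1
    rw [real_inner_self_eq_norm_sq, real_inner_self_eq_norm_sq]
    linarith [o.inner_sq_add_areaForm_sq x y]
  have hle : angle x y ≤ π / 2 := arccos_le_pi_div_two.2 (div_nonneg h hxy.le)
  calc angle x y = π / 2 * (2 / π * angle x y) := by field_simp
    _ ≤ π / 2 * (|ω x y| / (‖x‖ * ‖y‖)) := by
      rw [← hsin]; gcongr; exact mul_le_sin (angle_nonneg x y) hle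

theorem abs_inner_map_div_sub_le (f : V →L[ℝ] V) (u u' : V) (hfu : f u ≠ 0) :
    |⟪f u, f u'⟫ / ‖f u‖ ^ 2 - ⟪u, u'⟫ / ‖u‖ ^ 2| ≤ ‖f‖ * |ω u u'| / (‖u‖ * ‖f u‖) := by
  have hu : u ≠ 0 := by rintro rfl; exact hfu (map_zero f)
  have hu2 : ‖u‖ ^ 2 ≠ 0 := by positivity
  have hfu2 : ‖f u‖ ^ 2 ≠ 0 := by positivity
  set c := ⟪u, u'⟫ / ‖u‖ ^ 2
  set p := u' - c • u
  have horth : ⟪u, p⟫ = 0 := by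
    simp only [p, c, inner_sub_right, real_inner_smul_right, real_inner_self_eq_norm_sq]
    field_simp; ring
  have hp : ‖u‖ * ‖p‖ = |ω u u'| := by
    rw [← o.abs_areaForm_of_orthogonal horth]
    simp [p, map_sub, o.areaForm_apply_self]
  have hdiff : ⟪f u, f u'⟫ / ‖f u‖ ^ 2 - c = ⟪f u, f p⟫ / ‖f u‖ ^ 2 := by
    simp only [p, map_sub, map_smul, inner_sub_right, real_inner_smul_right,
      real_inner_self_eq_norm_sq]
    field_simp
  rw [hdiff, abs_div, abs_of_nonneg (by positivity : (0 : ℝ) ≤ ‖f u‖ ^ 2), ← hp,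
    div_le_div_iff₀ (by positivity) (by positivity)]
  calc |⟪f u, f p⟫| * (‖u‖ * ‖f u‖) ≤ ‖f u‖ * (‖f‖ * ‖p‖) * (‖u‖ * ‖f u‖) := by
        gcongr
        exact (abs_real_inner_le_norm _ _).trans (by gcongr; exact f.le_opNorm p)
    _ = ‖f‖ * (‖u‖ * ‖p‖) * ‖f u‖ ^ 2 := by ring

theorem abs_inner_apply_apply_div_sub_le (f g : V →L[ℝ] V) (u u' : V) (hfu : f u ≠ 0) :
    |⟪f u, g u'⟫ / ‖f u‖ ^ 2 - ⟪u, u'⟫ / ‖u‖ ^ 2| ≤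
      (‖f‖ * |ω u u'| / ‖u‖ + ‖f - g‖ * ‖u'‖) / ‖f u‖ := by
  have hfu' : 0 < ‖f u‖ := norm_pos_iff.2 hfu
  have hsplit : ⟪f u, g u'⟫ / ‖f u‖ ^ 2 - ⟪u, u'⟫ / ‖u‖ ^ 2 =
      (⟪f u, f u'⟫ / ‖f u‖ ^ 2 - ⟪u, u'⟫ / ‖u‖ ^ 2) - ⟪f u, (f - g) u'⟫ / ‖f u‖ ^ 2 := by
    simp only [sub_apply, inner_sub_right]; ring
  have hpert : |⟪f u, (f - g) u'⟫ / ‖f u‖ ^ 2| ≤ ‖f - g‖ * ‖u'‖ / ‖f u‖ := by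
    rw [abs_div, abs_of_nonneg (by positivity : (0 : ℝ) ≤ ‖f u‖ ^ 2),
      div_le_div_iff₀ (by positivity) hfu']
    calc |⟪f u, (f - g) u'⟫| * ‖f u‖ ≤ ‖f u‖ * (‖f - g‖ * ‖u'‖) * ‖f u‖ := by
          gcongr
          exact (abs_real_inner_le_norm _ _).trans (by gcongr; exact (f - g).le_opNorm u')
      _ = ‖f - g‖ * ‖u'‖ * ‖f u‖ ^ 2 := by ring
  rw [hsplit, add_div, div_div]
  exact (abs_sub _ _).trans (add_le_add (o.abs_inner_map_div_sub_le f u u' hfu) hpert)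

end Orientation

theorem succ_mul_pow_le_one {q : ℝ} (hq0 : 0 ≤ q) (hq : q ≤ 1 / 2) (j : ℕ) :
    (j + 1) * q ^ j ≤ 1 := by
  induction j with
  | zero => simp
  | succ j ih =>
    push_cast
    calc (j + 1 + 1) * q ^ (j + 1) = q * (j + 2) * q ^ j := by ring
      _ ≤ 1 / 2 * (j + 2) * q ^ j := by gcongr
      _ ≤ (j + 1) * q ^ j := by gcongr; linarith
      _ ≤ 1 := ih

theorem natCast_mul_pow_le {q : ℝ} (hq0 : 0 ≤ q) (hq : q ≤ 1 / 2) (j : ℕ) :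
    j * q ^ j ≤ q := by
  cases j with
  | zero => simpa using hq0
  | succ j =>
    calc ((j + 1 : ℕ) : ℝ) * q ^ (j + 1) = q * ((j + 1) * q ^ j) := by push_cast; ring
      _ ≤ q * 1 := by gcongr; exact succ_mul_pow_le_one hq0 hq j
      _ = q := mul_one q

-- The left side bounds `|cⱼ₊₁ - cⱼ|` through `Orientation.abs_inner_apply_apply_div_sub_le`.
theorem drift_le_half_pow {C lam κ : ℝ} (hC : 1 ≤ C) (hκ : 0 < κ) (hκC : κ ≤ C) (hlam : 0 ≤ lam)
    (hsmall : 12 * C ^ 3 * lam ≤ κ ^ 3) (j : ℕ) :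
    (C * (j * (C ^ 2 * lam) ^ j) / κ ^ j + lam ^ (j + 1) * C ^ j) / κ ^ (j + 1) ≤
      (1 / 2) ^ (j + 2) := by
  set q := 2 * C ^ 2 * lam / κ ^ 2 with hq
  set r := 2 * C * lam / κ with hr
  have hq0 : 0 ≤ q := by positivity
  have hr0 : 0 ≤ r := by positivity
  have hκ3 : 0 < κ ^ 3 := by positivity
  have hq1 : q ≤ 1 / 2 := by
    rw [hq, div_le_iff₀ (by positivity)]
    nlinarith [mul_le_mul_of_nonneg_left hκC (by positivity : 0 ≤ 2 * C ^ 2 * lam)]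
  have hr1 : r ≤ 1 := by
    have hκ2 : κ ^ 2 ≤ C ^ 2 := by gcongr
    have : C ^ 2 * (12 * C * lam) ≤ C ^ 2 * κ := by nlinarith
    rw [hr, div_le_iff₀ hκ]
    nlinarith [le_of_mul_le_mul_left this (by positivity)]
  have hsplit : (C * (j * (C ^ 2 * lam) ^ j) / κ ^ j + lam ^ (j + 1) * C ^ j) / κ ^ (j + 1) =
      (1 / 2) ^ j * (C / κ * (j * q ^ j) + lam / κ * r ^ j) := by
    rw [hq, hr]; simp only [div_pow, mul_pow, ← pow_mul]; field_simp; ring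
  have hcoef : C / κ * q + lam / κ ≤ 1 / 4 := by
    have hκ2 : κ ^ 2 ≤ C ^ 3 := by nlinarith [pow_le_pow_left₀ hκ.le hκC 2]
    have : C / κ * q + lam / κ = (2 * C ^ 3 * lam + lam * κ ^ 2) / κ ^ 3 := by
      rw [hq]; field_simp
    rw [this, div_le_iff₀ hκ3]
    nlinarith
  rw [hsplit, pow_add]
  gcongr
  calc C / κ * (j * q ^ j) + lam / κ * r ^ j ≤ C / κ * q + lam / κ * 1 := by
        gcongr
        · exact natCast_mul_pow_le hq0 hq1 j
        · exact pow_le_one₀ hr0 hr1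
    _ ≤ (1 / 2) ^ 2 := by linarith

theorem pi_mul_natCast_mul_pow_le_rpow {κ : ℝ} (hκ : 0 < κ) (hκ5 : κ ≤ 5) (i : ℕ) :
    π * (i * (5 ^ 2 * (κ / 10) ^ 4 / κ ^ 2) ^ i) ≤ ((κ / 10) ^ 4) ^ ((i : ℝ) / 4) := by
  have hbase : 5 ^ 2 * (κ / 10) ^ 4 / κ ^ 2 = κ / 10 * (κ / 40) := by field_simp; ring
  have hrpow : ((κ / 10) ^ 4) ^ ((i : ℝ) / 4) = (κ / 10) ^ i := by
    rw [← Real.rpow_natCast (κ / 10) 4, ← Real.rpow_mul (by positivity)]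
    norm_num [mul_div_cancel₀]
  have hq := natCast_mul_pow_le (q := κ / 40) (by positivity) (by linarith) i
  rw [hbase, hrpow, mul_pow]
  calc π * (i * ((κ / 10) ^ i * (κ / 40) ^ i)) = π * (i * (κ / 40) ^ i) * (κ / 10) ^ i := by ring
    _ ≤ 1 * (κ / 10) ^ i := by gcongr; nlinarith [pi_le_four, pi_pos]
    _ = (κ / 10) ^ i := one_mul _

instance : Fact (finrank ℝ E2 = 2) := ⟨finrank_euclideanSpace_fin⟩

theorem matProd_succ_apply (A : ℕ → E2 →L[ℝ] E2) (i : ℕ) (v : E2) :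
    matProd A (i + 1) v = A (i + 1) (matProd A i v) := rfl

theorem norm_matProd_apply_le {A : ℕ → E2 →L[ℝ] E2} {C : ℝ} (hC : 0 ≤ C) {i : ℕ}
    (hA : ∀ j, 1 ≤ j → j ≤ i → ‖A j‖ ≤ C) (v : E2) : ‖matProd A i v‖ ≤ C ^ i * ‖v‖ := by
  induction i with
  | zero => simp [matProd]
  | succ i ih =>
    calc ‖matProd A (i + 1) v‖ ≤ ‖A (i + 1)‖ * ‖matProd A i v‖ := (A (i + 1)).le_opNorm _
      _ ≤ C * (C ^ i * ‖v‖) := by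
        gcongr
        · exact hA (i + 1) (by omega) le_rfl
        · exact ih fun j hj hji => hA j hj (by omega)
      _ = C ^ (i + 1) * ‖v‖ := by ring

structure IsPerturbation (C lam : ℝ) (A A' : ℕ → E2 →L[ℝ] E2) (n : ℕ) : Prop where
  norm_le : ∀ j, 1 ≤ j → j ≤ n → ‖A j‖ ≤ C
  norm_le' : ∀ j, 1 ≤ j → j ≤ n → ‖A' j‖ ≤ C
  abs_det_le : ∀ j, 1 ≤ j → j ≤ n → |LinearMap.det (A j : E2 →ₗ[ℝ] E2)| ≤ lam
  norm_sub_le : ∀ j, 1 ≤ j → j ≤ n → ‖A j - A' j‖ ≤ lam ^ j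

namespace IsPerturbation

variable {C lam : ℝ} {A A' : ℕ → E2 →L[ℝ] E2} {n : ℕ}

theorem mono (h : IsPerturbation C lam A A' n) {m : ℕ} (hmn : m ≤ n) :
    IsPerturbation C lam A A' m where
  norm_le j hj hjm := h.norm_le j hj (hjm.trans hmn)
  norm_le' j hj hjm := h.norm_le' j hj (hjm.trans hmn)
  abs_det_le j hj hjm := h.abs_det_le j hj (hjm.trans hmn)
  norm_sub_le j hj hjm := h.norm_sub_le j hj (hjm.trans hmn)

theorem abs_areaForm_matProd_le (o : Orientation ℝ E2 (Fin 2)) (hC : 1 ≤ C) (hlam : 0 ≤ lam)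
    (h : IsPerturbation C lam A A' n) (v : E2) :
    |o.areaForm (matProd A n v) (matProd A' n v)| ≤ n * (C ^ 2 * lam) ^ n * ‖v‖ ^ 2 := by
  induction n with
  | zero => simp [matProd]
  | succ i ih =>
    have ih := ih (h.mono i.le_succ)
    have hw := norm_matProd_apply_le (by linarith) h.norm_le v
    have hw' := norm_matProd_apply_le (by linarith) (h.mono i.le_succ).norm_le' v
    have hdet := h.abs_det_le (i + 1) (by omega) le_rfl
    have hsub := h.norm_sub_le (i + 1) (by omega) le_rfl
    rw [matProd_succ_apply] at hw
    rw [matProd_succ_apply, matProd_succ_apply]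
    calc _ ≤ _ := o.abs_areaForm_apply_apply_le (A (i + 1)) (A' (i + 1)) _ _
      _ ≤ lam * (i * (C ^ 2 * lam) ^ i * ‖v‖ ^ 2)
            + C ^ (i + 1) * ‖v‖ * (lam ^ (i + 1) * (C ^ i * ‖v‖)) := by
        gcongr
      _ = (C ^ 2 * lam) ^ i * lam * ‖v‖ ^ 2 * (i + C) := by ring
      _ ≤ (C ^ 2 * lam) ^ i * lam * ‖v‖ ^ 2 * (C ^ 2 * (i + 1)) := by
        have hC2 : 1 ≤ C ^ 2 := one_le_pow₀ hC
        gcongr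
        nlinarith [mul_le_mul_of_nonneg_left hC2 (Nat.cast_nonneg (α := ℝ) i)]
      _ = ((i + 1 : ℕ) : ℝ) * (C ^ 2 * lam) ^ (i + 1) * ‖v‖ ^ 2 := by push_cast; ring

variable {κ : ℝ} {v : E2}

theorem norm_sq_div_two_le_inner_matProd (hC : 1 ≤ C) (hκ : 0 < κ) (hκC : κ ≤ C)
    (hlam : 0 ≤ lam) (hsmall : 12 * C ^ 3 * lam ≤ κ ^ 3) (h : IsPerturbation C lam A A' n)
    (hv : ‖v‖ = 1) (hgrowth : ∀ j ≤ n, κ ^ j ≤ ‖matProd A j v‖) :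
    ‖matProd A n v‖ ^ 2 / 2 ≤ ⟪matProd A n v, matProd A' n v⟫ := by
  let o : Orientation ℝ E2 (Fin 2) := (EuclideanSpace.basisFun (Fin 2) ℝ).toBasis.orientation
  set c : ℕ → ℝ := fun j => ⟪matProd A j v, matProd A' j v⟫ / ‖matProd A j v‖ ^ 2
  have hpos : ∀ j ≤ n, 0 < ‖matProd A j v‖ := fun j hj => (pow_pos hκ j).trans_le (hgrowth j hj)
  have hstep : ∀ j < n, dist (c j) (c (j + 1)) ≤ (1 / 2) ^ (j + 2) := by
    intro j hj
    have hj' := h.mono hj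
    have hω := (h.mono hj.le).abs_areaForm_matProd_le o hC hlam v
    have hw' := norm_matProd_apply_le (by linarith) (h.mono hj.le).norm_le' v
    simp only [hv, one_pow, mul_one] at hω hw'
    rw [dist_comm, Real.dist_eq]
    calc |c (j + 1) - c j|
        ≤ (‖A (j + 1)‖ * |o.areaForm (matProd A j v) (matProd A' j v)| / ‖matProd A j v‖
            + ‖A (j + 1) - A' (j + 1)‖ * ‖matProd A' j v‖) / ‖A (j + 1) (matProd A j v)‖ :=
          o.abs_inner_apply_apply_div_sub_le (A (j + 1)) (A' (j + 1)) (matProd A j v)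
            (matProd A' j v) (norm_pos_iff.1 (hpos (j + 1) hj))
      _ ≤ (C * (j * (C ^ 2 * lam) ^ j) / κ ^ j + lam ^ (j + 1) * C ^ j) / κ ^ (j + 1) := by
          gcongr
          exacts [hj'.norm_le (j + 1) (by omega) le_rfl, hgrowth j hj.le,
            hj'.norm_sub_le (j + 1) (by omega) le_rfl, hgrowth (j + 1) hj]
      _ ≤ (1 / 2) ^ (j + 2) := drift_le_half_pow hC hκ hκC hlam hsmall j
  have hdist : dist (c 0) (c n) ≤ 1 / 2 := by
    refine (dist_le_range_sum_of_dist_le (d := fun j => (1 / 2 : ℝ) ^ (j + 2)) n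
      fun hk => hstep _ hk).trans ?_
    have := sum_geometric_two_le n
    simp only [pow_add, ← Finset.sum_mul] at this ⊢
    linarith
  have hc0 : c 0 = 1 := by simp [c, matProd, hv]
  rw [hc0, Real.dist_eq, abs_le] at hdist
  have hcn : 1 / 2 ≤ c n := by linarith
  rwa [le_div_iff₀ (pow_pos (hpos n le_rfl) 2), mul_comm, ← div_eq_mul_one_div] at hcn

theorem angle_matProd_le (hC : 1 ≤ C) (hκ : 0 < κ) (hκC : κ ≤ C) (hlam : 0 ≤ lam)
    (hsmall : 12 * C ^ 3 * lam ≤ κ ^ 3) (h : IsPerturbation C lam A A' n) (hv : ‖v‖ = 1)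
    (hgrowth : ∀ j ≤ n, κ ^ j ≤ ‖matProd A j v‖) :
    matProd A n v ≠ 0 ∧ matProd A' n v ≠ 0 ∧
      angle (matProd A n v) (matProd A' n v) ≤ π * (n * (C ^ 2 * lam / κ ^ 2) ^ n) := by
  let o : Orientation ℝ E2 (Fin 2) := (EuclideanSpace.basisFun (Fin 2) ℝ).toBasis.orientation
  have hinner := h.norm_sq_div_two_le_inner_matProd hC hκ hκC hlam hsmall hv hgrowth
  have hω := h.abs_areaForm_matProd_le o hC hlam v
  rw [hv, one_pow, mul_one] at hω
  have hκw : κ ^ n ≤ ‖matProd A n v‖ := hgrowth n le_rfl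
  set w := matProd A n v
  set w' := matProd A' n v
  have hw : 0 < ‖w‖ := (pow_pos hκ n).trans_le hκw
  have hw' : ‖w‖ / 2 ≤ ‖w'‖ := by
    refine le_of_mul_le_mul_left ?_ hw
    linarith [real_inner_le_norm w w', show ‖w‖ ^ 2 / 2 = ‖w‖ * (‖w‖ / 2) by ring]
  refine ⟨norm_pos_iff.1 hw, norm_pos_iff.1 (by linarith), ?_⟩
  calc angle w w' ≤ π / 2 * (|o.areaForm w w'| / (‖w‖ * ‖w'‖)) :=
        o.angle_le_of_inner_nonneg (norm_pos_iff.1 hw) (norm_pos_iff.1 (by linarith))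
          (le_trans (by positivity) hinner)
    _ ≤ π / 2 * (n * (C ^ 2 * lam) ^ n / (κ ^ n * (κ ^ n / 2))) := by
        gcongr
        linarith
    _ = π * (n * (C ^ 2 * lam / κ ^ 2) ^ n) := by
        rw [div_pow, ← pow_mul, mul_comm 2 n, pow_mul]
        field_simp

end IsPerturbation

/-- Matrix Perturbation Lemma, angle estimate: for every `κ ∈ (0, 5]` there is
`b₀ ∈ (0, κ)` such that for every `b ∈ (0, b₀)` there is `λ` with `b < λ < min 1 κ`
such that for all `n ≥ 1`, every unit vector `v`, and all matrices `A₁, …, Aₙ`,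
`A₁', …, Aₙ'` of determinant `b` and norm at most `5`, if `‖Aⁱ v‖ ≥ κⁱ` and
`‖Aᵢ - Aᵢ'‖ < λⁱ` for all `1 ≤ i ≤ n`, then for all `1 ≤ i ≤ n` the vectors `Aⁱ v` and
`A'ⁱ v` are nonzero and the angle between them is at most `λ^(i/4)`. -/
theorem matrix_perturbation_angle :
    ∀ κ : ℝ, 0 < κ → κ ≤ 5 →
    ∃ b₀ : ℝ, 0 < b₀ ∧ b₀ < κ ∧
    ∀ b : ℝ, 0 < b → b < b₀ →
    ∃ lam : ℝ, b < lam ∧ lam < min 1 κ ∧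
    ∀ n : ℕ, 1 ≤ n → ∀ v : E2, ‖v‖ = 1 →
    ∀ A A' : ℕ → (E2 →L[ℝ] E2),
    (∀ i : ℕ, 1 ≤ i → i ≤ n →
      LinearMap.det (A i : E2 →ₗ[ℝ] E2) = b ∧ LinearMap.det (A' i : E2 →ₗ[ℝ] E2) = b ∧
      ‖A i‖ ≤ 5 ∧ ‖A' i‖ ≤ 5) →
    (∀ i : ℕ, 1 ≤ i → i ≤ n → κ ^ i ≤ ‖matProd A i v‖ ∧ ‖A i - A' i‖ < lam ^ i) →
    ∀ i : ℕ, 1 ≤ i → i ≤ n →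
      matProd A i v ≠ 0 ∧ matProd A' i v ≠ 0 ∧
      InnerProductGeometry.angle (matProd A i v) (matProd A' i v) ≤ lam ^ ((i : ℝ) / 4) := by
  intro κ hκ hκ5
  have hlam : (κ / 10) ^ 4 < min 1 κ :=
    lt_min (pow_lt_one₀ (by positivity) (by linarith) (by norm_num))
      ((pow_le_of_le_one (by positivity) (by linarith) (by norm_num)).trans_lt (by linarith))
  refine ⟨(κ / 10) ^ 4, by positivity, (lt_min_iff.1 hlam).2,
    fun b hb hblam => ⟨(κ / 10) ^ 4, hblam, hlam, ?_⟩⟩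
  intro n _ v hv A A' hmat hpert i _ hin
  have hP : IsPerturbation 5 ((κ / 10) ^ 4) A A' i :=
    ⟨fun j hj hji => (hmat j hj (hji.trans hin)).2.2.1,
      fun j hj hji => (hmat j hj (hji.trans hin)).2.2.2,
      fun j hj hji => by rw [(hmat j hj (hji.trans hin)).1, abs_of_pos hb]; exact hblam.le,
      fun j hj hji => (hpert j hj (hji.trans hin)).2.le⟩
  have hgrowth : ∀ j ≤ i, κ ^ j ≤ ‖matProd A j v‖ := by
    rintro (_ | j) hj
    · simp [matProd, hv]
    · exact (hpert (j + 1) (by omega) (hj.trans hin)).1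
  obtain ⟨hw, hw', hangle⟩ := hP.angle_matProd_le (by norm_num) hκ hκ5 (by positivity)
    (by nlinarith [pow_pos hκ 3]) hv hgrowth
  exact ⟨hw, hw', hangle.trans (pi_mul_natCast_mul_pow_le_rpow hκ hκ5 i)⟩
end
end

section
/- In the Bowen lifting setup, for every continuous function φ : X → ℝ and all k, l ∈ ℕ, |∫ (φ ∘ F^k)* dν̄ − ∫ (φ ∘ F^{k+l})* dν̄| ≤ var φ(k). -/
open MeasureTheory Filter

noncomputable section

/-- The discretization of `φ : X → ℝ` along the fibers of `π : X → Y`: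
`φ*(y) = inf {φ(x) : π(x) = y}`. -/
def disc {X Y : Type*} (π : X → Y) (φ : X → ℝ) : Y → ℝ :=
  fun y => sInf (φ '' (π ⁻¹' {y}))

/-- The variation of `φ : X → ℝ` at scale `r`:
`sup {|φ(x) - φ(x')| : dist x x' ≤ r}`. -/
def varAt {X : Type*} [MetricSpace X] (φ : X → ℝ) (r : ℝ) : ℝ :=
  sSup {t : ℝ | ∃ x x' : X, dist x x' ≤ r ∧ t = |φ x - φ x'|}

/-- Bowen lifting setup: the integrals of the discretizations `(φ ∘ F^k)*` form an
almost-Cauchy sequence, namely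
`|∫ (φ ∘ F^k)* dν̄ - ∫ (φ ∘ F^{k+l})* dν̄| ≤ var φ(k)` for all `k, l`. -/
theorem bowen_discretization_cauchy
    {X Y : Type*} [MetricSpace X] [CompactSpace X] [MeasurableSpace Y]
    (π : X → Y) (F : X → X) (Fbar : Y → Y) (ν : Measure Y) (C β : ℝ)
    (hπ : Function.Surjective π) (hF : Continuous F) (hFbar : Measurable Fbar)
    (hcomm : π ∘ F = Fbar ∘ π)
    (hprob : IsProbabilityMeasure ν)
    (hinv : Measure.map Fbar ν = ν)
    (hC : 0 < C) (hβ0 : 0 < β) (hβ1 : β < 1)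
    (hdiam : ∀ (y : Y) (k : ℕ), Metric.diam (F^[k] '' (π ⁻¹' {y})) ≤ C * β ^ k)
    (hmeas : ∀ φ : X → ℝ, Continuous φ → ∀ k : ℕ, Measurable (disc π (φ ∘ F^[k])))
    (φ : X → ℝ) (hφ : Continuous φ) (k l : ℕ) :
    |(∫ y, disc π (φ ∘ F^[k]) y ∂ν) - ∫ y, disc π (φ ∘ F^[k + l]) y ∂ν| ≤
      varAt φ (C * β ^ k) := by
  have hY : Nonempty Y := by
    by_contra h
    rw [not_nonempty_iff] at h
    have h1 := hprob.measure_univ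
    rw [Measure.eq_zero_of_isEmpty ν] at h1
    simp at h1
  have hX : Nonempty X := by
    obtain ⟨y⟩ := hY
    obtain ⟨x, -⟩ := hπ y
    exact ⟨x⟩
  obtain ⟨xm, -, hxm⟩ := isCompact_univ.exists_isMinOn Set.univ_nonempty hφ.continuousOn
  obtain ⟨xM, -, hxM⟩ := isCompact_univ.exists_isMaxOn Set.univ_nonempty hφ.continuousOn
  have hlo : ∀ x, φ xm ≤ φ x := fun x => hxm (Set.mem_univ x)
  have hhi : ∀ x, φ x ≤ φ xM := fun x => hxM (Set.mem_univ x)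
  set V := varAt φ (C * β ^ k) with hVdef
  have hCβ : 0 ≤ C * β ^ k := le_of_lt (mul_pos hC (pow_pos hβ0 k))
  have hbddV : BddAbove {t : ℝ | ∃ x x' : X, dist x x' ≤ C * β ^ k ∧ t = |φ x - φ x'|} := by
    refine ⟨φ xM - φ xm, ?_⟩
    rintro t ⟨x, x', -, rfl⟩
    rw [abs_sub_le_iff]
    constructor <;> linarith [hlo x, hhi x, hlo x', hhi x']
  have hmemV : ∀ x x' : X, dist x x' ≤ C * β ^ k → |φ x - φ x'| ≤ V := fun x x' h =>
    le_csSup hbddV ⟨x, x', h, rfl⟩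
  have hV0 : 0 ≤ V := by
    obtain ⟨x⟩ := hX
    have := hmemV x x (by simpa using hCβ)
    simpa using this
  have hcommN : ∀ (n : ℕ) (x : X), π (F^[n] x) = Fbar^[n] (π x) := by
    intro n
    induction n with
    | zero => simp
    | succ n ih =>
      intro x
      rw [Function.iterate_succ_apply', Function.iterate_succ_apply',
        show π (F (F^[n] x)) = Fbar (π (F^[n] x)) from congrFun hcomm _, ih x]
  have hfib : ∀ y : Y, (π ⁻¹' {y}).Nonempty := fun y => by
    obtain ⟨x, hx⟩ := hπ y
    exact ⟨x, by simp [hx]⟩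
  have hbddBelow : ∀ (S : Set X), BddBelow (φ '' S) := fun S =>
    ⟨φ xm, by rintro t ⟨x, -, rfl⟩; exact hlo x⟩
  have hdisc_lo : ∀ (n : ℕ) (y : Y), φ xm ≤ disc π (φ ∘ F^[n]) y := by
    intro n y
    refine le_csInf ((hfib y).image _) ?_
    rintro t ⟨x, -, rfl⟩
    exact hlo _
  have hdisc_hi : ∀ (n : ℕ) (y : Y), disc π (φ ∘ F^[n]) y ≤ φ xM := by
    intro n y
    obtain ⟨x, hx⟩ := hfib y
    exact le_trans (csInf_le ⟨φ xm, by rintro t ⟨x', -, rfl⟩; exact hlo _⟩ ⟨x, hx, rfl⟩) (hhi _)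
  set M : ℝ := max |φ xm| |φ xM| with hMdef
  have habs : ∀ (n : ℕ) (y : Y), ‖disc π (φ ∘ F^[n]) y‖ ≤ M := by
    intro n y
    rw [Real.norm_eq_abs, abs_le]
    constructor
    · have := hdisc_lo n y
      have h2 : -|φ xm| ≤ φ xm := neg_abs_le _
      have h3 : |φ xm| ≤ M := le_max_left _ _
      linarith
    · have := hdisc_hi n y
      have h2 : φ xM ≤ |φ xM| := le_abs_self _
      have h3 : |φ xM| ≤ M := le_max_right _ _
      linarith
  have hint : ∀ n : ℕ, Integrable (disc π (φ ∘ F^[n])) ν := by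
    intro n
    refine Integrable.mono' (integrable_const M) (hmeas φ hφ n).aestronglyMeasurable ?_
    filter_upwards with y using habs n y
  have hmapl : ∀ m : ℕ, Measure.map (Fbar^[m]) ν = ν := by
    intro m
    induction m with
    | zero => simp
    | succ n ih =>
      rw [Function.iterate_succ', ← Measure.map_map hFbar (hFbar.iterate n), ih, hinv]
  have hint' : Integrable (fun y => disc π (φ ∘ F^[k]) (Fbar^[l] y)) ν := by
    refine Integrable.mono' (integrable_const M)
      ((hmeas φ hφ k).comp (hFbar.iterate l)).aestronglyMeasurable ?_
    filter_upwards with y using habs k _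
  have heq : (∫ y, disc π (φ ∘ F^[k]) y ∂ν)
      = ∫ y, disc π (φ ∘ F^[k]) (Fbar^[l] y) ∂ν := by
    conv_lhs => rw [← hmapl l]
    rw [integral_map (hFbar.iterate l).aemeasurable (hmeas φ hφ k).aestronglyMeasurable]
  have hpt : ∀ y : Y, |disc π (φ ∘ F^[k]) (Fbar^[l] y) - disc π (φ ∘ F^[k + l]) y| ≤ V := by
    intro y
    set A : Set X := F^[k + l] '' (π ⁻¹' {y}) with hA
    set B : Set X := F^[k] '' (π ⁻¹' {Fbar^[l] y}) with hB
    have hAB : A ⊆ B := by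
      rintro _ ⟨x, hx, rfl⟩
      refine ⟨F^[l] x, ?_, ?_⟩
      · simp only [Set.mem_preimage, Set.mem_singleton_iff] at hx ⊢
        rw [hcommN l x, hx]
      · rw [Function.iterate_add_apply]
    have hAne : A.Nonempty := (hfib y).image _
    have hBne : B.Nonempty := (hfib _).image _
    have hAφ : (φ '' A).Nonempty := hAne.image φ
    have hBφ : (φ '' B).Nonempty := hBne.image φ
    have hBbd : Bornology.IsBounded B := isCompact_univ.isBounded.subset (Set.subset_univ B)
    have hdB : ∀ a ∈ B, ∀ b ∈ B, dist a b ≤ C * β ^ k := fun a ha b hb =>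
      le_trans (Metric.dist_le_diam_of_mem hBbd ha hb) (hdiam _ k)
    have hd1 : disc π (φ ∘ F^[k + l]) y = sInf (φ '' A) := by
      rw [disc, hA, ← Set.image_comp]
    have hd2 : disc π (φ ∘ F^[k]) (Fbar^[l] y) = sInf (φ '' B) := by
      rw [disc, hB, ← Set.image_comp]
    rw [hd1, hd2, abs_sub_le_iff]
    constructor
    · obtain ⟨a, ha⟩ := hAne
      have h1 : sInf (φ '' B) ≤ φ a := csInf_le (hbddBelow B) ⟨a, hAB ha, rfl⟩
      have h2 : φ a - V ≤ sInf (φ '' A) := by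
        refine le_csInf hAφ ?_
        rintro t ⟨b, hb, rfl⟩
        have := hmemV a b (hdB a (hAB ha) b (hAB hb))
        rw [abs_sub_le_iff] at this
        linarith [this.1]
      linarith
    · have h1 : sInf (φ '' A) ≤ sInf (φ '' B) + V := by
        obtain ⟨a, ha⟩ := hAne
        have h2 : sInf (φ '' A) ≤ φ a := csInf_le (hbddBelow A) ⟨a, ha, rfl⟩
        have h3 : φ a - V ≤ sInf (φ '' B) := by
          refine le_csInf hBφ ?_
          rintro t ⟨b, hb, rfl⟩
          have := hmemV a b (hdB a (hAB ha) b hb)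
          rw [abs_sub_le_iff] at this
          linarith [this.1]
        linarith
      linarith
  rw [heq, ← integral_sub hint' (hint (k + l))]
  rw [← Real.norm_eq_abs]
  calc ‖∫ y, (disc π (φ ∘ F^[k]) (Fbar^[l] y) - disc π (φ ∘ F^[k + l]) y) ∂ν‖
      ≤ V * (ν Set.univ).toReal := by
        refine norm_integral_le_of_norm_le_const ?_
        filter_upwards with y
        rw [Real.norm_eq_abs]
        exact hpt y
    _ = V := by simp
end
end

section
/- In the Bowen lifting setup, there exists a Borel probability measure ν̃ on X such that for every continuous function φ : X → ℝ, ∫ φ dν̃ = lim_{k→∞} ∫ (φ ∘ F^k)* dν̄. Moreover, any Borel probability measure ν̃ on X with this property is F-invariant, i.e. F_* ν̃ = ν̃. -/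
open MeasureTheory Filter

noncomputable section

/-!
Since `F^k` maps each fibre `π⁻¹{y}` into a set of diameter at most `C βᵏ`, uniform continuity
makes `(φ ∘ F^k)*(π x)` uniformly close to `φ (F^k x)` for large `k`. Consequently
`k ↦ ∫ (φ ∘ F^k)* dν̄` is asymptotically additive, homogeneous and monotone in `φ`, and it is
Cauchy: by invariance of `ν̄` its `k`-th term is `∫ (φ ∘ F^k)* ∘ F̄^m dν̄`, and both
`(φ ∘ F^k)*(F̄^m (π x))` and `(φ ∘ F^(k+m))*(π x)` are close to `φ (F^(k+m) x)`. The limit is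
thus a normalised positive linear functional on `C(X)`, represented by a probability measure
(Riesz–Markov–Kakutani). Replacing `φ` by `φ ∘ F` shifts the sequence by one, so any measure
representing the limit integrates `φ ∘ F` and `φ` alike, hence is `F`-invariant.
-/

open Function Set Topology CompactlySupported

lemma abs_sInf_sub_le_of_forall_abs_sub_le {S : Set ℝ} (hS : S.Nonempty) {c ε : ℝ}
    (h : ∀ s ∈ S, |s - c| ≤ ε) : |sInf S - c| ≤ ε := by
  obtain ⟨s, hs⟩ := hS
  have hlower : ∀ t ∈ S, c - ε ≤ t := fun t ht => by linarith [(abs_le.mp (h t ht)).1]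
  have hle : sInf S ≤ s := csInf_le ⟨c - ε, hlower⟩ hs
  have hge : c - ε ≤ sInf S := le_csInf ⟨s, hs⟩ hlower
  exact abs_le.mpr ⟨by linarith, by linarith [(abs_le.mp (h s hs)).2]⟩

section Disc

variable {X Y : Type*} {π : X → Y}

lemma abs_disc_sub_le {φ : X → ℝ} {y : Y} (hy : (π ⁻¹' {y}).Nonempty) {c ε : ℝ}
    (h : ∀ x ∈ π ⁻¹' {y}, |φ x - c| ≤ ε) : |disc π φ y - c| ≤ ε :=
  abs_sInf_sub_le_of_forall_abs_sub_le (hy.image φ) (forall_mem_image.2 h)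

lemma disc_le_disc {φ ψ : X → ℝ} (hφ : BddBelow (range φ)) (hφψ : φ ≤ ψ) {y : Y}
    (hy : (π ⁻¹' {y}).Nonempty) : disc π φ y ≤ disc π ψ y :=
  le_csInf (hy.image ψ) <| forall_mem_image.2 fun x hx =>
    (csInf_le (hφ.mono (image_subset_range φ _)) (mem_image_of_mem φ hx)).trans (hφψ x)

lemma disc_const {y : Y} (hy : (π ⁻¹' {y}).Nonempty) (c : ℝ) : disc π (fun _ => c) y = c := by
  simp only [disc, hy.image_const, csInf_singleton]

lemma integrable_disc_comp {Z : Type*} [TopologicalSpace Z] [CompactSpace Z] [MeasurableSpace Y]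
    {ν : Measure Y} [IsFiniteMeasure ν] (hπ : Surjective π) {φ : Z → ℝ} (hφ : Continuous φ)
    (g : X → Z) (hmeas : Measurable (disc π (φ ∘ g))) : Integrable (disc π (φ ∘ g)) ν := by
  obtain ⟨M, hM⟩ := isCompact_univ.exists_bound_of_continuousOn hφ.continuousOn
  refine Integrable.of_bound hmeas.aestronglyMeasurable M (ae_of_all _ fun y => ?_)
  simpa using abs_disc_sub_le (π := π) (hπ y) (c := 0) fun x _ => by simpa using hM (g x) trivial

end Disc

lemma tendsto_integral_of_tendstoUniformly_comp {X Y ι : Type*} [MeasurableSpace Y]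
    {ν : Measure Y} [IsFiniteMeasure ν] {l : Filter ι} {π : X → Y} (hπ : Surjective π)
    {g : ι → Y → ℝ} (hg : TendstoUniformly (fun i => g i ∘ π) 0 l) :
    Tendsto (fun i => ∫ y, g i y ∂ν) l (𝓝 0) := by
  have hg' : TendstoUniformly g 0 l := by
    have := hg.comp (surjInv hπ)
    simp only [comp_assoc, comp_surjInv, comp_id] at this
    exact this
  rw [Metric.tendsto_nhds]
  intro ε hε
  have hε' : 0 < ε / (ν.real univ + 1) := by positivity
  filter_upwards [Metric.tendstoUniformly_iff.mp hg' _ hε'] with i hi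
  have hbound : ‖∫ y, g i y ∂ν‖ ≤ ε / (ν.real univ + 1) * ν.real univ :=
    norm_integral_le_of_norm_le_const <| ae_of_all _ fun y => by
      simpa [dist_comm] using (hi y).le
  rw [dist_zero_right]
  refine hbound.trans_lt ?_
  rw [div_mul_eq_mul_div, div_lt_iff₀ (by positivity)]
  nlinarith [measureReal_nonneg (μ := ν) (s := univ)]

lemma abs_integral_sub_integral_le {α : Type*} [MeasurableSpace α] {μ : Measure α}
    [IsProbabilityMeasure μ] {f g : α → ℝ} (hf : Integrable f μ) (hg : Integrable g μ) {ε : ℝ}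
    (h : ∀ x, |f x - g x| ≤ ε) : |∫ x, f x ∂μ - ∫ x, g x ∂μ| ≤ ε := by
  rw [← integral_sub hf hg]
  simpa using norm_integral_le_of_norm_le_const (μ := μ) (f := fun x => f x - g x) (ae_of_all μ h)

def discIntegral {X Y : Type*} [MeasurableSpace Y] (π : X → Y) (F : X → X) (ν : Measure Y)
    (φ : X → ℝ) (k : ℕ) : ℝ :=
  ∫ y, disc π (φ ∘ F^[k]) y ∂ν

section BowenLift

variable {X Y : Type*} [MetricSpace X] [CompactSpace X] {π : X → Y} {F : X → X} {C β : ℝ}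

theorem tendstoUniformly_disc_comp_iterate_sub (hβ0 : 0 ≤ β) (hβ1 : β < 1)
    (hdiam : ∀ (y : Y) (k : ℕ), Metric.diam (F^[k] '' (π ⁻¹' {y})) ≤ C * β ^ k)
    {φ : X → ℝ} (hφ : Continuous φ) :
    TendstoUniformly (fun k x => disc π (φ ∘ F^[k]) (π x) - φ (F^[k] x)) 0 atTop := by
  rw [Metric.tendstoUniformly_iff]
  intro ε hε
  obtain ⟨δ, hδ, hφδ⟩ := Metric.uniformContinuous_iff.mp
    (CompactSpace.uniformContinuous_of_continuous hφ) (ε / 2) (half_pos hε)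
  have hscale : Tendsto (fun k => C * β ^ k) atTop (𝓝 0) := by
    simpa using (tendsto_pow_atTop_nhds_zero_of_lt_one hβ0 hβ1).const_mul C
  filter_upwards [hscale.eventually (gt_mem_nhds hδ)] with k hk x
  have hclose : |disc π (φ ∘ F^[k]) (π x) - φ (F^[k] x)| ≤ ε / 2 := by
    refine abs_disc_sub_le ⟨x, rfl⟩ fun x' hx' => ?_
    have hdist : dist (F^[k] x') (F^[k] x) < δ :=
      ((Metric.dist_le_diam_of_mem Metric.isBounded_of_compactSpace
        (mem_image_of_mem _ hx') (mem_image_of_mem _ rfl)).trans (hdiam _ k)).trans_lt hk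
    simpa [Real.dist_eq] using (hφδ hdist).le
  rw [Pi.zero_apply, dist_zero_left, Real.norm_eq_abs]
  linarith

variable [MeasurableSpace Y] {ν : Measure Y}

theorem tendsto_discIntegral_add_sub [IsFiniteMeasure ν] (hπ : Surjective π) (hβ0 : 0 ≤ β)
    (hβ1 : β < 1) (hdiam : ∀ (y : Y) (k : ℕ), Metric.diam (F^[k] '' (π ⁻¹' {y})) ≤ C * β ^ k)
    (hmeas : ∀ φ : X → ℝ, Continuous φ → ∀ k : ℕ, Measurable (disc π (φ ∘ F^[k])))
    {φ ψ : X → ℝ} (hφ : Continuous φ) (hψ : Continuous ψ) :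
    Tendsto (fun k => discIntegral π F ν (φ + ψ) k -
      (discIntegral π F ν φ k + discIntegral π F ν ψ k)) atTop (𝓝 0) := by
  have hint {χ : X → ℝ} (hχ : Continuous χ) (k : ℕ) : Integrable (disc π (χ ∘ F^[k])) ν :=
    integrable_disc_comp (ν := ν) hπ hχ _ (hmeas χ hχ k)
  have herr {χ : X → ℝ} (hχ : Continuous χ) :=
    tendstoUniformly_disc_comp_iterate_sub hβ0 hβ1 hdiam hχ
  have hdefect : TendstoUniformly (fun k => (fun y => disc π ((φ + ψ) ∘ F^[k]) y -
      (disc π (φ ∘ F^[k]) y + disc π (ψ ∘ F^[k]) y)) ∘ π) 0 atTop := by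
    convert (herr (hφ.add hψ)).sub ((herr hφ).add (herr hψ)) using 1
    · ext k x
      simp only [comp_apply, Pi.add_apply, Pi.sub_apply]
      ring
    · simp
  refine (tendsto_integral_of_tendstoUniformly_comp (ν := ν) hπ hdefect).congr fun k => ?_
  refine (integral_sub (hint (hφ.add hψ) k) ((hint hφ k).add (hint hψ k))).trans ?_
  rw [integral_add' (hint hφ k) (hint hψ k)]
  rfl

theorem tendsto_discIntegral_smul_sub [IsFiniteMeasure ν] (hπ : Surjective π) (hβ0 : 0 ≤ β)
    (hβ1 : β < 1) (hdiam : ∀ (y : Y) (k : ℕ), Metric.diam (F^[k] '' (π ⁻¹' {y})) ≤ C * β ^ k)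
    (hmeas : ∀ φ : X → ℝ, Continuous φ → ∀ k : ℕ, Measurable (disc π (φ ∘ F^[k])))
    (c : ℝ) {φ : X → ℝ} (hφ : Continuous φ) :
    Tendsto (fun k => discIntegral π F ν (c • φ) k - c * discIntegral π F ν φ k) atTop (𝓝 0) := by
  have hint {χ : X → ℝ} (hχ : Continuous χ) (k : ℕ) : Integrable (disc π (χ ∘ F^[k])) ν :=
    integrable_disc_comp (ν := ν) hπ hχ _ (hmeas χ hχ k)
  have herr {χ : X → ℝ} (hχ : Continuous χ) :=
    tendstoUniformly_disc_comp_iterate_sub hβ0 hβ1 hdiam hχ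
  have hdefect : TendstoUniformly (fun k => (fun y => disc π ((c • φ) ∘ F^[k]) y -
      c * disc π (φ ∘ F^[k]) y) ∘ π) 0 atTop := by
    convert (herr (hφ.const_smul c)).sub
      ((uniformContinuous_const_smul c).comp_tendstoUniformly (herr hφ)) using 1
    · ext k x
      simp only [Pi.sub_apply, comp_apply, Pi.smul_apply, smul_eq_mul]
      ring
    · ext x
      simp
  refine (tendsto_integral_of_tendstoUniformly_comp (ν := ν) hπ hdefect).congr fun k => ?_
  rw [integral_sub (hint (hφ.const_smul c) k) ((hint hφ k).const_mul c), integral_const_mul]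
  rfl

theorem discIntegral_mono [IsFiniteMeasure ν] (hπ : Surjective π)
    (hmeas : ∀ φ : X → ℝ, Continuous φ → ∀ k : ℕ, Measurable (disc π (φ ∘ F^[k])))
    {φ ψ : X → ℝ} (hφ : Continuous φ) (hψ : Continuous ψ) (hφψ : φ ≤ ψ) (k : ℕ) :
    discIntegral π F ν φ k ≤ discIntegral π F ν ψ k :=
  integral_mono (integrable_disc_comp hπ hφ _ (hmeas φ hφ k))
    (integrable_disc_comp hπ hψ _ (hmeas ψ hψ k)) fun y =>
      disc_le_disc ((isCompact_range hφ).bddBelow.mono (range_comp_subset_range _ _))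
        (fun _ => hφψ _) (hπ y)

theorem cauchySeq_discIntegral [IsProbabilityMeasure ν] {Fbar : Y → Y} (hπ : Surjective π)
    (hcomm : π ∘ F = Fbar ∘ π) (hFbar : Measurable Fbar) (hinv : Measure.map Fbar ν = ν)
    (hβ0 : 0 ≤ β) (hβ1 : β < 1)
    (hdiam : ∀ (y : Y) (k : ℕ), Metric.diam (F^[k] '' (π ⁻¹' {y})) ≤ C * β ^ k)
    (hmeas : ∀ φ : X → ℝ, Continuous φ → ∀ k : ℕ, Measurable (disc π (φ ∘ F^[k])))
    {φ : X → ℝ} (hφ : Continuous φ) : CauchySeq (discIntegral π F ν φ) := by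
  have hint (k : ℕ) : Integrable (disc π (φ ∘ F^[k])) ν :=
    integrable_disc_comp hπ hφ _ (hmeas φ hφ k)
  rw [Metric.cauchySeq_iff']
  intro ε hε
  obtain ⟨N, hN⟩ := eventually_atTop.1 <| Metric.tendstoUniformly_iff.1
    (tendstoUniformly_disc_comp_iterate_sub hβ0 hβ1 hdiam hφ) (ε / 3) (by positivity)
  refine ⟨N, fun n hn => ?_⟩
  obtain ⟨m, rfl⟩ := Nat.exists_eq_add_of_le hn
  have hpres : MeasurePreserving (Fbar^[m]) ν ν := (MeasurePreserving.mk hFbar hinv).iterate m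
  have hshift : discIntegral π F ν φ N = ∫ y, disc π (φ ∘ F^[N]) (Fbar^[m] y) ∂ν := by
    have := integral_map (f := disc π (φ ∘ F^[N])) hpres.measurable.aemeasurable
      (by rw [hpres.map_eq]; exact (hmeas φ hφ N).aestronglyMeasurable)
    rwa [hpres.map_eq] at this
  have hclose (y : Y) :
      |disc π (φ ∘ F^[N + m]) y - disc π (φ ∘ F^[N]) (Fbar^[m] y)| ≤ 2 * (ε / 3) := by
    obtain ⟨x, rfl⟩ := hπ y
    have h₁ := hN (N + m) (Nat.le_add_right N m) x
    have h₂ := hN N le_rfl (F^[m] x)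
    rw [(semiconj_iff_comp_eq.2 hcomm).iterate_right m x, ← iterate_add_apply] at h₂
    simp only [Pi.zero_apply, dist_zero_left, Real.norm_eq_abs] at h₁ h₂
    linarith [abs_sub_le (disc π (φ ∘ F^[N + m]) (π x)) (φ (F^[N + m] x))
      (disc π (φ ∘ F^[N]) (Fbar^[m] (π x))), abs_sub_comm (φ (F^[N + m] x))
      (disc π (φ ∘ F^[N]) (Fbar^[m] (π x)))]
  rw [Real.dist_eq, hshift]
  calc _ ≤ 2 * (ε / 3) :=
        abs_integral_sub_integral_le (hint _) (hpres.integrable_comp_of_integrable (hint N)) hclose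
    _ < ε := by linarith

theorem exists_positiveLinearMap_tendsto_discIntegral [IsProbabilityMeasure ν] {Fbar : Y → Y}
    (hπ : Surjective π) (hcomm : π ∘ F = Fbar ∘ π) (hFbar : Measurable Fbar)
    (hinv : Measure.map Fbar ν = ν) (hβ0 : 0 ≤ β) (hβ1 : β < 1)
    (hdiam : ∀ (y : Y) (k : ℕ), Metric.diam (F^[k] '' (π ⁻¹' {y})) ≤ C * β ^ k)
    (hmeas : ∀ φ : X → ℝ, Continuous φ → ∀ k : ℕ, Measurable (disc π (φ ∘ F^[k]))) :
    ∃ Λ : C_c(X, ℝ) →ₚ[ℝ] ℝ, ∀ f : C_c(X, ℝ),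
      Tendsto (discIntegral π F ν f) atTop (𝓝 (Λ f)) := by
  have hL (f : C_c(X, ℝ)) := (cauchySeq_discIntegral hπ hcomm hFbar hinv hβ0 hβ1 hdiam hmeas
    f.continuous).tendsto_limUnder
  refine ⟨
    { toFun f := limUnder atTop (discIntegral π F ν f)
      map_add' f g := tendsto_nhds_unique (hL (f + g)) ?_
      map_smul' c f := tendsto_nhds_unique (hL (c • f)) ?_
      monotone' f g hfg := le_of_tendsto_of_tendsto' (hL f) (hL g)
        (discIntegral_mono hπ hmeas f.continuous g.continuous hfg) }, hL⟩
  · simpa using ((hL f).add (hL g)).add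
      (tendsto_discIntegral_add_sub (ν := ν) hπ hβ0 hβ1 hdiam hmeas f.continuous g.continuous)
  · simpa using ((hL f).const_mul c).add
      (tendsto_discIntegral_smul_sub (ν := ν) hπ hβ0 hβ1 hdiam hmeas c f.continuous)

theorem exists_isProbabilityMeasure_tendsto_discIntegral [MeasurableSpace X] [BorelSpace X]
    [IsProbabilityMeasure ν] {Fbar : Y → Y} (hπ : Surjective π) (hcomm : π ∘ F = Fbar ∘ π)
    (hFbar : Measurable Fbar) (hinv : Measure.map Fbar ν = ν) (hβ0 : 0 ≤ β) (hβ1 : β < 1)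
    (hdiam : ∀ (y : Y) (k : ℕ), Metric.diam (F^[k] '' (π ⁻¹' {y})) ≤ C * β ^ k)
    (hmeas : ∀ φ : X → ℝ, Continuous φ → ∀ k : ℕ, Measurable (disc π (φ ∘ F^[k]))) :
    ∃ μ : Measure X, IsProbabilityMeasure μ ∧ ∀ φ : X → ℝ, Continuous φ →
      Tendsto (discIntegral π F ν φ) atTop (𝓝 (∫ x, φ x ∂μ)) := by
  obtain ⟨Λ, hΛ⟩ :=
    exists_positiveLinearMap_tendsto_discIntegral hπ hcomm hFbar hinv hβ0 hβ1 hdiam hmeas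
  have hlim (φ : X → ℝ) (hφ : Continuous φ) :
      Tendsto (discIntegral π F ν φ) atTop (𝓝 (∫ x, φ x ∂(RealRMK.rieszMeasure Λ))) := by
    have h := RealRMK.integral_rieszMeasure Λ ⟨⟨φ, hφ⟩, .of_compactSpace φ⟩
    simp only [CompactlySupportedContinuousMap.coe_mk, ContinuousMap.coe_mk] at h
    rw [h]
    exact hΛ _
  refine ⟨RealRMK.rieszMeasure Λ, isProbabilityMeasure_iff_real.2 ?_, hlim⟩
  have hone : discIntegral π F ν (fun _ => 1) = fun _ => 1 := by
    ext k
    simp [discIntegral, comp_def, disc_const (hπ _)]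
  have := hlim (fun _ => 1) continuous_const
  rw [hone] at this
  simpa using tendsto_nhds_unique this tendsto_const_nhds

end BowenLift

theorem MeasureTheory.Measure.map_eq_self_of_forall_integral_comp_eq {X : Type*}
    [TopologicalSpace X] [HasOuterApproxClosed X] [MeasurableSpace X] [BorelSpace X]
    {μ : Measure X} [IsFiniteMeasure μ] {F : X → X} (hF : Continuous F)
    (h : ∀ φ : X → ℝ, Continuous φ → ∫ x, φ (F x) ∂μ = ∫ x, φ x ∂μ) : μ.map F = μ :=
  ext_of_forall_integral_eq_of_IsFiniteMeasure fun f => by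
    rw [integral_map hF.measurable.aemeasurable f.continuous.aestronglyMeasurable]
    exact h f f.continuous

theorem map_eq_self_of_tendsto_discIntegral {X Y : Type*} [TopologicalSpace X]
    [HasOuterApproxClosed X] [MeasurableSpace X] [BorelSpace X] [MeasurableSpace Y] {π : X → Y}
    {F : X → X} {ν : Measure Y} {μ : Measure X} [IsFiniteMeasure μ] (hF : Continuous F)
    (hlim : ∀ φ : X → ℝ, Continuous φ → Tendsto (discIntegral π F ν φ) atTop (𝓝 (∫ x, φ x ∂μ))) :
    μ.map F = μ := by
  refine Measure.map_eq_self_of_forall_integral_comp_eq hF fun φ hφ => ?_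
  have hshift :
      discIntegral π F ν (fun x => φ (F x)) = fun k => discIntegral π F ν φ (k + 1) := by
    ext k
    simp only [discIntegral, comp_def, iterate_succ_apply']
  refine tendsto_nhds_unique (hlim _ (hφ.comp hF)) ?_
  rw [hshift]
  exact (hlim φ hφ).comp (tendsto_add_atTop_nat 1)

theorem bowen_lift_exists_and_invariant_general
    {X Y : Type*} [MetricSpace X] [CompactSpace X]
    [MeasurableSpace X] [BorelSpace X] [MeasurableSpace Y]
    (π : X → Y) (F : X → X) (Fbar : Y → Y) (ν : Measure Y) (C β : ℝ)
    (hπ : Function.Surjective π) (hF : Continuous F) (hFbar : Measurable Fbar)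
    (hcomm : π ∘ F = Fbar ∘ π)
    (hprob : IsProbabilityMeasure ν)
    (hinv : Measure.map Fbar ν = ν)
    (hβ0 : 0 < β) (hβ1 : β < 1)
    (hdiam : ∀ (y : Y) (k : ℕ), Metric.diam (F^[k] '' (π ⁻¹' {y})) ≤ C * β ^ k)
    (hmeas : ∀ φ : X → ℝ, Continuous φ → ∀ k : ℕ, Measurable (disc π (φ ∘ F^[k]))) :
    (∃ νt : Measure X, IsProbabilityMeasure νt ∧
      ∀ φ : X → ℝ, Continuous φ →
        Tendsto (fun k : ℕ => ∫ y, disc π (φ ∘ F^[k]) y ∂ν) atTop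
          (nhds (∫ x, φ x ∂νt))) ∧
    (∀ νt : Measure X, IsProbabilityMeasure νt →
      (∀ φ : X → ℝ, Continuous φ →
        Tendsto (fun k : ℕ => ∫ y, disc π (φ ∘ F^[k]) y ∂ν) atTop
          (nhds (∫ x, φ x ∂νt))) →
      Measure.map F νt = νt) :=
  ⟨exists_isProbabilityMeasure_tendsto_discIntegral hπ hcomm hFbar hinv hβ0.le hβ1 hdiam hmeas,
    fun _ _ hlim => map_eq_self_of_tendsto_discIntegral hF hlim⟩

/-- Bowen lifting: there is a Borel probability measure `ν̃` on `X` with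
`∫ φ dν̃ = lim_k ∫ (φ ∘ F^k)* dν̄` for every continuous `φ`; moreover any Borel
probability measure with this property is `F`-invariant. -/
theorem bowen_lift_exists_and_invariant
    {X Y : Type*} [MetricSpace X] [CompactSpace X]
    [MeasurableSpace X] [BorelSpace X] [MeasurableSpace Y]
    (π : X → Y) (F : X → X) (Fbar : Y → Y) (ν : Measure Y) (C β : ℝ)
    (hπ : Function.Surjective π) (hF : Continuous F) (hFbar : Measurable Fbar)
    (hcomm : π ∘ F = Fbar ∘ π)
    (hprob : IsProbabilityMeasure ν)
    (hinv : Measure.map Fbar ν = ν)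
    (hC : 0 < C) (hβ0 : 0 < β) (hβ1 : β < 1)
    (hdiam : ∀ (y : Y) (k : ℕ), Metric.diam (F^[k] '' (π ⁻¹' {y})) ≤ C * β ^ k)
    (hmeas : ∀ φ : X → ℝ, Continuous φ → ∀ k : ℕ, Measurable (disc π (φ ∘ F^[k]))) :
    (∃ νt : Measure X, IsProbabilityMeasure νt ∧
      ∀ φ : X → ℝ, Continuous φ →
        Tendsto (fun k : ℕ => ∫ y, disc π (φ ∘ F^[k]) y ∂ν) atTop
          (nhds (∫ x, φ x ∂νt))) ∧
    (∀ νt : Measure X, IsProbabilityMeasure νt →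
      (∀ φ : X → ℝ, Continuous φ →
        Tendsto (fun k : ℕ => ∫ y, disc π (φ ∘ F^[k]) y ∂ν) atTop
          (nhds (∫ x, φ x ∂νt))) →
      Measure.map F νt = νt) :=
  bowen_lift_exists_and_invariant_general π F Fbar ν C β hπ hF hFbar hcomm hprob hinv hβ0 hβ1 hdiam
    hmeas
end
end

section
/- In the Bowen lifting setup, let ν̃ be the lifted measure. Then for every continuous function φ : X → ℝ and every k ∈ ℕ, |∫ φ dν̃ − ∫ (φ ∘ F^k)* dν̄| ≤ var φ(k). -/
open MeasureTheory Filter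

noncomputable section

/-!
Since `π ∘ F^m = F̄^m ∘ π`, the set `F^{k+m}(π⁻¹{y})` lies inside `F^k(π⁻¹{F̄^m y})`, a set of
diameter at most `Cβ^k`; hence `(φ ∘ F^{k+m})*` and `(φ ∘ F^k)* ∘ F̄^m` differ by at most
`var φ(k)` everywhere. Integrating against the `F̄`-invariant measure `ν̄` gives
`|∫ (φ ∘ F^{k+m})* dν̄ - ∫ (φ ∘ F^k)* dν̄| ≤ var φ(k)` for every `m`, and letting `m → ∞`
yields the estimate.
-/

lemma abs_csInf_sub_csInf_le_of_subset {A B : Set ℝ} {V : ℝ} (hA : A.Nonempty) (hAB : A ⊆ B)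
    (hB : ∀ a ∈ B, ∀ b ∈ B, a - b ≤ V) : |sInf A - sInf B| ≤ V := by
  obtain ⟨a₀, ha₀⟩ := hA
  have hBbdd : BddBelow B := ⟨a₀ - V, fun b hb => by linarith [hB a₀ (hAB ha₀) b hb]⟩
  have hle : sInf B ≤ sInf A := csInf_le_csInf hBbdd ⟨a₀, ha₀⟩ hAB
  have hge : sInf A - V ≤ sInf B := by
    refine le_csInf ⟨a₀, hAB ha₀⟩ fun b hb => ?_
    linarith [csInf_le (hBbdd.mono hAB) ha₀, hB a₀ (hAB ha₀) b hb]
  rw [abs_sub_le_iff]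
  constructor <;> linarith

lemma Continuous.exists_forall_abs_le {X : Type*} [TopologicalSpace X] [CompactSpace X]
    {φ : X → ℝ} (hφ : Continuous φ) : ∃ M, ∀ x, |φ x| ≤ M := by
  obtain ⟨M, hM⟩ := isCompact_univ.exists_bound_of_continuousOn hφ.continuousOn
  exact ⟨M, fun x => hM x (Set.mem_univ x)⟩

section Variation

variable {X : Type*} [MetricSpace X]

lemma abs_sub_le_varAt {φ : X → ℝ} {M r : ℝ} (hM : ∀ x, |φ x| ≤ M) {x x' : X}
    (h : dist x x' ≤ r) : |φ x - φ x'| ≤ varAt φ r := by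
  refine le_csSup ⟨M + M, ?_⟩ ⟨x, x', h, rfl⟩
  rintro t ⟨a, b, -, rfl⟩
  exact (abs_sub _ _).trans (add_le_add (hM a) (hM b))

lemma sub_le_varAt_of_diam_le [CompactSpace X] {φ : X → ℝ} (hφ : Continuous φ) {S : Set X}
    {r : ℝ} (hS : Metric.diam S ≤ r) {p q : X} (hp : p ∈ S) (hq : q ∈ S) :
    φ p - φ q ≤ varAt φ r := by
  obtain ⟨M, hM⟩ := hφ.exists_forall_abs_le
  have hdist : dist p q ≤ r :=
    (Metric.dist_le_diam_of_mem Metric.isBounded_of_compactSpace hp hq).trans hS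
  exact (le_abs_self _).trans (abs_sub_le_varAt hM hdist)

end Variation

section Discretization

variable {X Y : Type*} {π : X → Y}

lemma abs_disc_le (hπ : Function.Surjective π) {φ : X → ℝ} {M : ℝ} (hM : ∀ x, |φ x| ≤ M)
    (y : Y) : |disc π φ y| ≤ M := by
  obtain ⟨x, rfl⟩ := hπ y
  have hx : x ∈ π ⁻¹' {π x} := rfl
  have hlower : ∀ t ∈ φ '' (π ⁻¹' {π x}), -M ≤ t := by
    rintro _ ⟨x', -, rfl⟩
    exact neg_le_of_abs_le (hM x')
  rw [disc, abs_le]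
  exact ⟨le_csInf ⟨φ x, x, hx, rfl⟩ hlower,
    (csInf_le ⟨-M, hlower⟩ ⟨x, hx, rfl⟩).trans (le_of_abs_le (hM x))⟩

lemma abs_disc_comp_sub_disc_le {G : X → X} {T : Y → Y} (hπ : Function.Surjective π)
    (hsc : Function.Semiconj π G T) {ψ : X → ℝ} {V : ℝ}
    (hψ : ∀ y, ∀ x ∈ π ⁻¹' {y}, ∀ x' ∈ π ⁻¹' {y}, ψ x - ψ x' ≤ V) (y : Y) :
    |disc π (ψ ∘ G) y - disc π ψ (T y)| ≤ V := by
  obtain ⟨x, hx⟩ := hπ y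
  have hmaps : G '' (π ⁻¹' {y}) ⊆ π ⁻¹' {T y} := by
    rintro _ ⟨x', hx', rfl⟩
    simp only [Set.mem_preimage, Set.mem_singleton_iff] at hx' ⊢
    rw [hsc x', hx']
  rw [disc, Set.image_comp]
  refine abs_csInf_sub_csInf_le_of_subset ⟨_, G x, ⟨x, hx, rfl⟩, rfl⟩
    (Set.image_mono hmaps) ?_
  rintro _ ⟨a, ha, rfl⟩ _ ⟨b, hb, rfl⟩
  exact hψ _ a ha b hb

lemma abs_integral_disc_comp_sub_le [MeasurableSpace Y] {ν : Measure Y} [IsProbabilityMeasure ν]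
    {G : X → X} {T : Y → Y} (hπ : Function.Surjective π) (hsc : Function.Semiconj π G T)
    (hT : MeasurePreserving T ν ν) {ψ : X → ℝ} {M V : ℝ} (hM : ∀ x, |ψ x| ≤ M)
    (hψ_meas : Measurable (disc π ψ)) (hψG_meas : Measurable (disc π (ψ ∘ G)))
    (hψ : ∀ y, ∀ x ∈ π ⁻¹' {y}, ∀ x' ∈ π ⁻¹' {y}, ψ x - ψ x' ≤ V) :
    |∫ y, disc π (ψ ∘ G) y ∂ν - ∫ y, disc π ψ y ∂ν| ≤ V := by
  have hint : Integrable (disc π (ψ ∘ G)) ν :=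
    .of_bound hψG_meas.aestronglyMeasurable M
      (ae_of_all _ (abs_disc_le hπ fun x => hM (G x)))
  have hint_T : Integrable (fun y => disc π ψ (T y)) ν :=
    .of_bound (hψ_meas.comp hT.measurable).aestronglyMeasurable M
      (ae_of_all _ fun y => abs_disc_le hπ hM (T y))
  have hinv : ∫ y, disc π ψ (T y) ∂ν = ∫ y, disc π ψ y ∂ν := by
    rw [← integral_map hT.measurable.aemeasurable
      (hT.map_eq ▸ hψ_meas.aestronglyMeasurable), hT.map_eq]
  have hbound : ∀ y, ‖disc π (ψ ∘ G) y - disc π ψ (T y)‖ ≤ V :=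
    abs_disc_comp_sub_disc_le hπ hsc hψ
  calc |∫ y, disc π (ψ ∘ G) y ∂ν - ∫ y, disc π ψ y ∂ν|
      = ‖∫ y, disc π (ψ ∘ G) y - disc π ψ (T y) ∂ν‖ := by
        rw [integral_sub hint hint_T, hinv, Real.norm_eq_abs]
    _ ≤ V := by simpa using norm_integral_le_of_norm_le_const (ae_of_all ν hbound)

end Discretization

theorem bowen_lift_integral_estimate_general
    {X Y : Type*} [MetricSpace X] [CompactSpace X]
    [MeasurableSpace X] [MeasurableSpace Y]
    (π : X → Y) (F : X → X) (Fbar : Y → Y) (ν : Measure Y) (C β : ℝ)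
    (hπ : Function.Surjective π) (hFbar : Measurable Fbar)
    (hcomm : π ∘ F = Fbar ∘ π)
    (hprob : IsProbabilityMeasure ν)
    (hinv : Measure.map Fbar ν = ν)
    (hdiam : ∀ (y : Y) (k : ℕ), Metric.diam (F^[k] '' (π ⁻¹' {y})) ≤ C * β ^ k)
    (hmeas : ∀ φ : X → ℝ, Continuous φ → ∀ k : ℕ, Measurable (disc π (φ ∘ F^[k])))
    (νt : Measure X)
    (hlift : ∀ φ : X → ℝ, Continuous φ →
      Tendsto (fun k : ℕ => ∫ y, disc π (φ ∘ F^[k]) y ∂ν) atTop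
        (nhds (∫ x, φ x ∂νt)))
    (φ : X → ℝ) (hφ : Continuous φ) (k : ℕ) :
    |(∫ x, φ x ∂νt) - ∫ y, disc π (φ ∘ F^[k]) y ∂ν| ≤ varAt φ (C * β ^ k) := by
  have hsc : Function.Semiconj π F Fbar := fun x => congrFun hcomm x
  have hT : MeasurePreserving Fbar ν ν := ⟨hFbar, hinv⟩
  obtain ⟨M, hM⟩ := hφ.exists_forall_abs_le
  have hstep : ∀ m : ℕ, |∫ y, disc π (φ ∘ F^[k + m]) y ∂ν - ∫ y, disc π (φ ∘ F^[k]) y ∂ν|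
      ≤ varAt φ (C * β ^ k) := fun m => by
    have hmeas_km := hmeas φ hφ (k + m)
    rw [Function.iterate_add, ← Function.comp_assoc] at hmeas_km ⊢
    refine abs_integral_disc_comp_sub_le hπ (hsc.iterate_right m) (hT.iterate m)
      (fun x => hM _) (hmeas φ hφ k) hmeas_km fun y x hx x' hx' => ?_
    exact sub_le_varAt_of_diam_le hφ (hdiam y k) ⟨x, hx, rfl⟩ ⟨x', hx', rfl⟩
  have hlim : Tendsto (fun m : ℕ => ∫ y, disc π (φ ∘ F^[k + m]) y ∂ν) atTop
      (nhds (∫ x, φ x ∂νt)) := by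
    simpa only [Function.comp_def, add_comm _ k] using
      (hlift φ hφ).comp (tendsto_add_atTop_nat k)
  exact le_of_tendsto (hlim.sub_const _).abs (Eventually.of_forall hstep)

/-- Bowen lifting setup: if `ν̃` is the lifted measure, then for every continuous
`φ : X → ℝ` and every `k`, `|∫ φ dν̃ - ∫ (φ ∘ F^k)* dν̄| ≤ var φ(k)`. -/
theorem bowen_lift_integral_estimate
    {X Y : Type*} [MetricSpace X] [CompactSpace X]
    [MeasurableSpace X] [BorelSpace X] [MeasurableSpace Y]
    (π : X → Y) (F : X → X) (Fbar : Y → Y) (ν : Measure Y) (C β : ℝ)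
    (hπ : Function.Surjective π) (hF : Continuous F) (hFbar : Measurable Fbar)
    (hcomm : π ∘ F = Fbar ∘ π)
    (hprob : IsProbabilityMeasure ν)
    (hinv : Measure.map Fbar ν = ν)
    (hC : 0 < C) (hβ0 : 0 < β) (hβ1 : β < 1)
    (hdiam : ∀ (y : Y) (k : ℕ), Metric.diam (F^[k] '' (π ⁻¹' {y})) ≤ C * β ^ k)
    (hmeas : ∀ φ : X → ℝ, Continuous φ → ∀ k : ℕ, Measurable (disc π (φ ∘ F^[k])))
    (νt : Measure X) (hνt : IsProbabilityMeasure νt)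
    (hlift : ∀ φ : X → ℝ, Continuous φ →
      Tendsto (fun k : ℕ => ∫ y, disc π (φ ∘ F^[k]) y ∂ν) atTop
        (nhds (∫ x, φ x ∂νt)))
    (φ : X → ℝ) (hφ : Continuous φ) (k : ℕ) :
    |(∫ x, φ x ∂νt) - ∫ y, disc π (φ ∘ F^[k]) y ∂ν| ≤ varAt φ (C * β ^ k) :=
  bowen_lift_integral_estimate_general π F Fbar ν C β hπ hFbar hcomm hprob hinv hdiam hmeas νt hlift
    φ hφ k
end
end

section
/- In the Bowen lifting setup, let ν̃ be the lifted measure, and let φ : X → ℝ be a continuous function which is constant on every fiber π⁻¹{y}, y ∈ Y. Define φ̄ : Y → ℝ by φ̄(y) = φ(x) for any x ∈ π⁻¹{y} (this is well defined). Then φ̄ is bounded, ν̄-measurable and ∫_X φ dν̃ = ∫_Y φ̄ dν̄. -/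
open MeasureTheory Filter

noncomputable section

/-- Bowen lifting setup: if `ν̃` is the lifted measure and `φ : X → ℝ` is continuous and
constant on every fiber `π⁻¹{y}`, then the induced function `φ̄ : Y → ℝ` (well defined by
`φ̄(π x) = φ(x)`) is bounded, `ν̄`-measurable, and `∫ φ dν̃ = ∫ φ̄ dν̄`. -/
theorem bowen_lift_fiber_constant
    {X Y : Type*} [MetricSpace X] [CompactSpace X]
    [MeasurableSpace X] [BorelSpace X] [MeasurableSpace Y]
    (π : X → Y) (F : X → X) (Fbar : Y → Y) (ν : Measure Y) (C β : ℝ)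
    (hπ : Function.Surjective π) (hF : Continuous F) (hFbar : Measurable Fbar)
    (hcomm : π ∘ F = Fbar ∘ π)
    (hprob : IsProbabilityMeasure ν)
    (hinv : Measure.map Fbar ν = ν)
    (hC : 0 < C) (hβ0 : 0 < β) (hβ1 : β < 1)
    (hdiam : ∀ (y : Y) (k : ℕ), Metric.diam (F^[k] '' (π ⁻¹' {y})) ≤ C * β ^ k)
    (hmeas : ∀ φ : X → ℝ, Continuous φ → ∀ k : ℕ, Measurable (disc π (φ ∘ F^[k])))
    (νt : Measure X) (hνt : IsProbabilityMeasure νt)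
    (hlift : ∀ φ : X → ℝ, Continuous φ →
      Tendsto (fun k : ℕ => ∫ y, disc π (φ ∘ F^[k]) y ∂ν) atTop
        (nhds (∫ x, φ x ∂νt)))
    (φ : X → ℝ) (hφ : Continuous φ)
    (hconst : ∀ x x' : X, π x = π x' → φ x = φ x') :
    ∀ φbar : Y → ℝ, (∀ x : X, φbar (π x) = φ x) →
      (∃ M : ℝ, ∀ y : Y, |φbar y| ≤ M) ∧ Measurable φbar ∧
      (∫ x, φ x ∂νt) = ∫ y, φbar y ∂ν := by
  intro φbar hφbar
  have hsemi : Function.Semiconj π F Fbar := fun x => congrFun hcomm x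
  -- key: disc of φ ∘ F^[k] equals φbar ∘ Fbar^[k]
  have hkey : ∀ k : ℕ, disc π (φ ∘ F^[k]) = fun y => φbar (Fbar^[k] y) := by
    intro k
    funext y
    obtain ⟨x, hx⟩ := hπ y
    have himg : (φ ∘ F^[k]) '' (π ⁻¹' {y}) = {φbar (Fbar^[k] y)} := by
      apply Set.eq_singleton_iff_nonempty_unique_mem.2
      constructor
      · exact ⟨(φ ∘ F^[k]) x, ⟨x, by simp [hx], rfl⟩⟩
      · rintro _ ⟨x', hx', rfl⟩
        have hx'y : π x' = y := hx'
        have : π (F^[k] x') = Fbar^[k] y := by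
          rw [(hsemi.iterate_right k) x', hx'y]
        simp only [Function.comp_apply]
        rw [← hφbar (F^[k] x'), this]
    show sInf ((φ ∘ F^[k]) '' (π ⁻¹' {y})) = φbar (Fbar^[k] y)
    rw [himg, csInf_singleton]
  have hmb : Measurable φbar := by
    have h0 := hmeas φ hφ 0
    have : disc π (φ ∘ F^[0]) = φbar := by
      rw [show (φ ∘ F^[0]) = φ ∘ F^[0] from rfl, hkey 0]
      funext y; simp
    rwa [this] at h0
  refine ⟨?_, hmb, ?_⟩
  · rcases isEmpty_or_nonempty X with hX | hX
    · refine ⟨0, fun y => ?_⟩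
      obtain ⟨x, _⟩ := hπ y
      exact hX.elim x
    · obtain ⟨x0, -, hx0⟩ := isCompact_univ.exists_isMaxOn Set.univ_nonempty
        ((continuous_abs.comp hφ).continuousOn)
      refine ⟨|φ x0|, fun y => ?_⟩
      obtain ⟨x, hx⟩ := hπ y
      rw [← hx, hφbar]
      exact hx0 (Set.mem_univ x)
  · -- iterate invariance
    have hiter : ∀ k : ℕ, Measure.map (Fbar^[k]) ν = ν := by
      intro k
      induction k with
      | zero => simp
      | succ n ih =>
        rw [Function.iterate_succ', ← Measure.map_map hFbar (hFbar.iterate n), ih, hinv]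
    have hconst_seq : ∀ k : ℕ, (∫ y, disc π (φ ∘ F^[k]) y ∂ν) = ∫ y, φbar y ∂ν := by
      intro k
      rw [hkey k]
      calc (∫ y, φbar (Fbar^[k] y) ∂ν)
          = ∫ y, φbar y ∂(Measure.map (Fbar^[k]) ν) := by
            rw [integral_map (hFbar.iterate k).aemeasurable hmb.aestronglyMeasurable]
        _ = ∫ y, φbar y ∂ν := by rw [hiter k]
    have htend := hlift φ hφ
    simp only [hconst_seq] at htend
    exact tendsto_nhds_unique htend tendsto_const_nhds
end
end
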